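/- arXiv:math/0608297 — 11 statements merged into one kernel-verified Lean document; each statement's English description precedes it below -/
import Mathlib

section
/- If ω is an entire function all of whose zeros lie in the open upper half plane and which satisfies |ω(z)/ω*(z)| < 1 whenever Im(z) > 0, where ω*(z) = conj(ω(conj z)), then every zero of the function ω(z) + ω*(z) is real. -/
open Complex

theorem norm_conj_apply_conj_lt_of_im_neg {ω : ℂ → ℂ}
    (hineq : ∀ z : ℂ, 0 < z.im → ‖ω z‖ < ‖starRingEnd ℂ (ω (starRingEnd ℂ z))‖)
    {z : ℂ} (hz : z.im < 0) :
    ‖starRingEnd ℂ (ω (starRingEnd ℂ z))‖ < ‖ω z‖ := by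
  have h := hineq (starRingEnd ℂ z) (by simpa using neg_pos.mpr hz)
  rw [conj_conj, norm_conj] at h
  rwa [norm_conj]

theorem sum_omega_omegaStar_zeros_real_general
    (ω : ℂ → ℂ)
    (hineq : ∀ z : ℂ, 0 < z.im →
      ‖ω z‖ < ‖starRingEnd ℂ (ω (starRingEnd ℂ z))‖)
    (z : ℂ) (hz : ω z + starRingEnd ℂ (ω (starRingEnd ℂ z)) = 0) :
    z.im = 0 := by
  have hnorm : ‖ω z‖ = ‖starRingEnd ℂ (ω (starRingEnd ℂ z))‖ := by
    rw [eq_neg_of_add_eq_zero_left hz, norm_neg]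
  rcases lt_trichotomy z.im 0 with hlt | heq | hgt
  · exact absurd hnorm (norm_conj_apply_conj_lt_of_im_neg hineq hlt).ne'
  · exact heq
  · exact absurd hnorm (hineq z hgt).ne

theorem sum_omega_omegaStar_zeros_real
    (ω : ℂ → ℂ) (hdiff : Differentiable ℂ ω)
    (hzeros : ∀ z : ℂ, ω z = 0 → 0 < z.im)
    (hineq : ∀ z : ℂ, 0 < z.im →
      ‖ω z‖ < ‖starRingEnd ℂ (ω (starRingEnd ℂ z))‖)
    (z : ℂ) (hz : ω z + starRingEnd ℂ (ω (starRingEnd ℂ z)) = 0) :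
    z.im = 0 :=
  sum_omega_omegaStar_zeros_real_general ω hineq z hz
end

section
/- Let G be a polynomial with real coefficients having only real zeros, and let c, d be real numbers with |c| < |d|. If G has at least one root (deg G ≥ 1), then |G(ic)| < |G(id)|. -/
/-! Over `ℂ` the polynomial factors as `G(z) = lc(G) * ∏ (z - a)` over its roots `a`, so
`‖G(z)‖ = ‖lc(G)‖ * ∏ ‖z - a‖`. For a real root `a`, `‖I * c - a‖ ^ 2 = c ^ 2 + a ^ 2` grows strictly
with `|c|`, hence so does every factor, and there is at least one factor. -/

open Complex Polynomial

/-- Unlike `Multiset.prod_map_lt_prod_map`, `f` may vanish (e.g. at a root lying at `I * c`). -/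
theorem Multiset.prod_map_lt_prod_map_of_nonneg {R ι : Type*} [CommSemiring R] [LinearOrder R]
    [IsStrictOrderedRing R] {s : Multiset ι} (hs : s ≠ 0) (f g : ι → R)
    (hf : ∀ i ∈ s, 0 ≤ f i) (hfg : ∀ i ∈ s, f i < g i) :
    (s.map f).prod < (s.map g).prod := by
  induction s using Multiset.induction with
  | empty => exact absurd rfl hs
  | cons a t ih =>
    simp only [Multiset.map_cons, Multiset.prod_cons]
    rcases eq_or_ne t 0 with rfl | ht
    · simpa using hfg a (mem_cons_self a 0)
    · exact mul_lt_mul'' (hfg a (mem_cons_self a t))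
        (ih ht (fun i hi => hf i (mem_cons_of_mem hi)) (fun i hi => hfg i (mem_cons_of_mem hi)))
        (hf a (mem_cons_self a t))
        (prod_nonneg fun x hx => by
          obtain ⟨i, hi, rfl⟩ := mem_map.mp hx
          exact hf i (mem_cons_of_mem hi))

theorem Polynomial.Splits.norm_eval_lt_norm_eval {K : Type*} [NormedField K] {p : K[X]}
    (hp : p.Splits) (hdeg : 1 ≤ p.natDegree) {z w : K}
    (hroots : ∀ a ∈ p.roots, ‖z - a‖ < ‖w - a‖) :
    ‖p.eval z‖ < ‖p.eval w‖ := by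
  have hp0 : p ≠ 0 := by rintro rfl; simp at hdeg
  have hroots_ne : p.roots ≠ 0 := by
    rw [← Multiset.card_pos, ← hp.natDegree_eq_card_roots]
    exact hdeg
  have hnorm (x : K) : ‖p.eval x‖ = ‖p.leadingCoeff‖ * (p.roots.map (‖x - ·‖)).prod := by
    rw [hp.eval_eq_prod_roots, norm_mul]
    exact congrArg _ ((map_multiset_prod (normHom : K →*₀ ℝ) _).trans
      (congrArg _ (Multiset.map_map _ _ _)))
  rw [hnorm, hnorm]
  exact mul_lt_mul_of_pos_left
    (Multiset.prod_map_lt_prod_map_of_nonneg hroots_ne _ _ (fun _ _ => norm_nonneg _) hroots)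
    (norm_pos_iff.mpr (leadingCoeff_ne_zero.mpr hp0))

theorem Complex.norm_I_mul_sub_lt_of_im_eq_zero {a : ℂ} (ha : a.im = 0) {c d : ℝ}
    (hcd : |c| < |d|) : ‖I * c - a‖ < ‖I * d - a‖ := by
  have hsq (e : ℝ) : ‖I * e - a‖ ^ 2 = e ^ 2 + a.re ^ 2 := by
    rw [← normSq_eq_norm_sq, normSq_apply]
    simp only [sub_re, sub_im, mul_re, mul_im, I_re, I_im, ofReal_re, ofReal_im, ha]
    ring
  rw [← sq_lt_sq₀ (norm_nonneg _) (norm_nonneg _), hsq, hsq]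
  linarith [sq_lt_sq.mpr hcd]

theorem abs_eval_imaginary_strictMono (G : Polynomial ℝ)
    (hroots : ∀ z : ℂ, (G.map (algebraMap ℝ ℂ)).eval z = 0 → z.im = 0)
    (hdeg : 1 ≤ G.natDegree)
    (c d : ℝ) (hcd : |c| < |d|) :
    ‖(G.map (algebraMap ℝ ℂ)).eval (I * c)‖
      < ‖(G.map (algebraMap ℝ ℂ)).eval (I * d)‖ := by
  refine (IsAlgClosed.splits _).norm_eval_lt_norm_eval (by rwa [natDegree_map]) fun a ha => ?_
  exact norm_I_mul_sub_lt_of_im_eq_zero (hroots a (mem_roots'.mp ha).2) hcd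
end

section
/- Let G be a polynomial with real coefficients, all of whose roots are real, with deg G = n ≥ 1, let a > 0 and b be real. Then the function H(z) = G(z - ia)·e^{-ib} + G(z + ia)·e^{ib} is a polynomial of degree n or n-1 with real coefficients all of whose roots are real; moreover deg H = n if cos b ≠ 0 and deg H = n - 1 if cos b = 0. -/
/-!
If all roots of `G` are real and `Im z > 0`, then `z - i a` is strictly closer than `z + i a` to
every root, so `‖G (z - i a)‖ < ‖G (z + i a)‖` (and the reverse for `Im z < 0`). As
`‖e^{± i b}‖ = 1`, a zero of `H` must balance these two norms, so it is real. Conjugating the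
coefficients of `H` swaps its two summands, so they are real. Finally, by Taylor expansion the
coefficients of `H` in degrees `n` and `n - 1` are `2 c cos b` and
`2 G_{n-1} cos b - 2 a n c sin b`, where `c` is the leading coefficient of `G`.
-/

open Complex Polynomial

namespace Polynomial

section CommRing

variable {R : Type*} [CommRing R]

noncomputable def shiftSum (c₁ c₂ w : R) (p : R[X]) : R[X] :=
  C c₁ * p.comp (X - C w) + C c₂ * p.comp (X + C w)

variable (c₁ c₂ w : R) (p : R[X])

lemma shiftSum_eq_taylor :
    shiftSum c₁ c₂ w p = C c₁ * taylor (-w) p + C c₂ * taylor w p := by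
  rw [shiftSum, taylor_apply, taylor_apply, map_neg, sub_eq_add_neg]

lemma eval_shiftSum (z : R) :
    (shiftSum c₁ c₂ w p).eval z = c₁ * p.eval (z - w) + c₂ * p.eval (z + w) := by
  simp only [shiftSum, eval_add, eval_mul, eval_C, eval_comp, eval_sub, eval_X]

lemma shiftSum_swap_neg : shiftSum c₂ c₁ (-w) p = shiftSum c₁ c₂ w p := by
  rw [shiftSum, shiftSum, map_neg, sub_neg_eq_add, ← sub_eq_add_neg, add_comm]

lemma map_shiftSum {S : Type*} [CommRing S] (f : R →+* S) :
    (shiftSum c₁ c₂ w p).map f = shiftSum (f c₁) (f c₂) (f w) (p.map f) := by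
  simp only [shiftSum, Polynomial.map_add, Polynomial.map_mul, map_comp, Polynomial.map_sub,
    map_C, map_X]

lemma natDegree_shiftSum_le : (shiftSum c₁ c₂ w p).natDegree ≤ p.natDegree := by
  rw [shiftSum_eq_taylor]
  refine natDegree_add_le_of_degree_le ?_ ?_ <;>
    exact (natDegree_C_mul_le _ _).trans (natDegree_taylor _ _).le

lemma coeff_taylor_natDegree_sub_one (r : R) :
    (taylor r p).coeff (p.natDegree - 1) =
      p.coeff (p.natDegree - 1) + p.natDegree * r * p.leadingCoeff := by
  rcases Nat.eq_zero_or_pos p.natDegree with hd | hd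
  · rw [hd, eq_C_of_natDegree_eq_zero hd]
    simp
  have hle : (hasseDeriv (p.natDegree - 1) p).natDegree < 2 :=
    (natDegree_hasseDeriv_le p _).trans_lt (by omega)
  rw [taylor_coeff, eval_eq_sum_range' hle, Finset.sum_range_succ, Finset.sum_range_one,
    hasseDeriv_coeff, hasseDeriv_coeff, zero_add, Nat.choose_self,
    show 1 + (p.natDegree - 1) = p.natDegree by omega, Nat.choose_symm hd, Nat.choose_one_right]
  simp only [leadingCoeff, Nat.cast_one, one_mul, pow_zero, mul_one, pow_one]
  ring

lemma coeff_shiftSum_natDegree :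
    (shiftSum c₁ c₂ w p).coeff p.natDegree = (c₁ + c₂) * p.leadingCoeff := by
  rw [shiftSum_eq_taylor, coeff_add, coeff_C_mul, coeff_C_mul, coeff_taylor_natDegree,
    coeff_taylor_natDegree, add_mul]

lemma coeff_shiftSum_natDegree_sub_one :
    (shiftSum c₁ c₂ w p).coeff (p.natDegree - 1) =
      (c₁ + c₂) * p.coeff (p.natDegree - 1) +
        (c₂ - c₁) * p.natDegree * w * p.leadingCoeff := by
  rw [shiftSum_eq_taylor, coeff_add, coeff_C_mul, coeff_C_mul, coeff_taylor_natDegree_sub_one,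
    coeff_taylor_natDegree_sub_one]
  ring

lemma natDegree_shiftSum_of_mul_ne_zero (h : (c₁ + c₂) * p.leadingCoeff ≠ 0) :
    (shiftSum c₁ c₂ w p).natDegree = p.natDegree :=
  natDegree_eq_of_le_of_coeff_ne_zero (natDegree_shiftSum_le c₁ c₂ w p)
    (by rwa [coeff_shiftSum_natDegree])

lemma natDegree_shiftSum_of_add_eq_zero (h : c₁ + c₂ = 0)
    (h' : (c₂ - c₁) * p.natDegree * w * p.leadingCoeff ≠ 0) :
    (shiftSum c₁ c₂ w p).natDegree = p.natDegree - 1 := by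
  have hle : (shiftSum c₁ c₂ w p).natDegree ≤ p.natDegree - 1 :=
    natDegree_le_pred (natDegree_shiftSum_le c₁ c₂ w p)
      (by rw [coeff_shiftSum_natDegree, h, zero_mul])
  exact natDegree_eq_of_le_of_coeff_ne_zero hle
    (by rwa [coeff_shiftSum_natDegree_sub_one, h, zero_mul, zero_add])

end CommRing

end Polynomial

lemma Complex.norm_sub_I_mul_lt_norm_add_I_mul {x : ℂ} {t : ℝ} (h : 0 < x.im * t) :
    ‖x - I * t‖ < ‖x + I * t‖ := by
  rw [norm_def, norm_def]
  refine Real.sqrt_lt_sqrt (normSq_nonneg _) ?_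
  simp only [normSq_apply, sub_re, sub_im, add_re, add_im, mul_re, mul_im, I_re, I_im,
    ofReal_re, ofReal_im]
  nlinarith

namespace Polynomial

lemma norm_eval_lt_norm_eval_of_forall_roots {p : ℂ[X]} (hp : 0 < p.natDegree)
    {w₁ w₂ : ℂ} (h : ∀ r ∈ p.roots, ‖w₁ - r‖ < ‖w₂ - r‖) : ‖p.eval w₁‖ < ‖p.eval w₂‖ := by
  have hroots : p.roots ≠ 0 := (IsAlgClosed.splits p).roots_ne_zero hp.ne'
  have hp0 : p ≠ 0 := fun h => hroots (by simp [h])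
  have hw₂ : ¬p.IsRoot w₂ := fun hw =>
    (norm_nonneg (w₁ - w₂)).not_gt (by simpa using h w₂ ((mem_roots hp0).mpr hw))
  by_cases hw₁ : p.IsRoot w₁
  · rw [hw₁.eq_zero, norm_zero, norm_pos_iff]
    exact hw₂
  have hnorm (w : ℂ) : ‖p.eval w‖ = ‖p.leadingCoeff‖ * (p.roots.map (‖w - ·‖)).prod := by
    rw [(IsAlgClosed.splits p).eval_eq_prod_roots, norm_mul]
    exact congrArg _ ((map_multiset_prod (normHom : ℂ →*₀ ℝ) _).trans
      (congrArg _ (Multiset.map_map _ _ _)))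
  rw [hnorm, hnorm]
  refine mul_lt_mul_of_pos_left (Multiset.prod_map_lt_prod_map hroots _ _ (fun r hr => ?_) h)
    (norm_pos_iff.mpr (leadingCoeff_ne_zero.mpr hp0))
  exact norm_pos_iff.mpr (sub_ne_zero.mpr fun hr' => hw₁ (hr' ▸ (mem_roots hp0).mp hr))

lemma im_eq_zero_of_eval_shiftSum_eq_zero {p : ℂ[X]} (hp : 0 < p.natDegree)
    (hreal : ∀ r ∈ p.roots, r.im = 0) {c₁ c₂ : ℂ} (hc₁ : c₁ ≠ 0) (hc : ‖c₁‖ = ‖c₂‖)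
    {a : ℝ} (ha : a ≠ 0) {z : ℂ} (hz : (shiftSum c₁ c₂ (I * a) p).eval z = 0) : z.im = 0 := by
  have hnorm : ‖p.eval (z - I * a)‖ = ‖p.eval (z + I * a)‖ := by
    rw [eval_shiftSum, add_eq_zero_iff_eq_neg] at hz
    have := congrArg (‖·‖) hz
    simp only [norm_mul, norm_neg, ← hc] at this
    exact mul_left_cancel₀ (norm_ne_zero_iff.mpr hc₁) this
  by_contra hz0
  rcases (mul_ne_zero hz0 ha).lt_or_gt with hneg | hpos
  · refine (norm_eval_lt_norm_eval_of_forall_roots hp fun r hr => ?_).ne hnorm.symm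
    have := norm_sub_I_mul_lt_norm_add_I_mul (x := z - r) (t := -a)
      (by rw [sub_im, hreal r hr, sub_zero]; linarith)
    simp only [ofReal_neg, mul_neg, sub_neg_eq_add, ← sub_eq_add_neg] at this
    convert this using 2 <;> ring
  · refine (norm_eval_lt_norm_eval_of_forall_roots hp fun r hr => ?_).ne hnorm
    have := norm_sub_I_mul_lt_norm_add_I_mul (x := z - r) (t := a)
      (by rwa [sub_im, hreal r hr, sub_zero])
    convert this using 2 <;> ring

lemma im_coeff_shiftSum_eq_zero (p : ℝ[X]) (c : ℂ) (a : ℝ) (k : ℕ) :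
    ((shiftSum c (starRingEnd ℂ c) (I * a) (p.map (algebraMap ℝ ℂ))).coeff k).im = 0 := by
  rw [← conj_eq_iff_im, ← coeff_map, map_shiftSum, map_map]
  have hconj : (starRingEnd ℂ).comp (algebraMap ℝ ℂ) = algebraMap ℝ ℂ := by
    ext x; simp
  rw [hconj, conj_conj, map_mul, conj_I, conj_ofReal, neg_mul, shiftSum_swap_neg]

lemma natDegree_shiftSum_exp_of_cos_ne_zero {p : ℂ[X]} (hp : p ≠ 0) (w : ℂ) {b : ℝ}
    (hb : Real.cos b ≠ 0) :
    (shiftSum (exp (-(b * I))) (exp (b * I)) w p).natDegree = p.natDegree := by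
  refine natDegree_shiftSum_of_mul_ne_zero _ _ _ _ ?_
  rw [← neg_mul, add_comm, ← two_cos, ← ofReal_cos]
  exact mul_ne_zero (mul_ne_zero two_ne_zero (ofReal_ne_zero.mpr hb))
    (leadingCoeff_ne_zero.mpr hp)

lemma natDegree_shiftSum_exp_of_cos_eq_zero {p : ℂ[X]} (hp : 0 < p.natDegree) {a : ℝ}
    (ha : a ≠ 0) {b : ℝ} (hb : Real.cos b = 0) :
    (shiftSum (exp (-(b * I))) (exp (b * I)) (I * a) p).natDegree = p.natDegree - 1 := by
  have hsin : Real.sin b ≠ 0 := fun h => by simpa [h, hb] using Real.sin_sq_add_cos_sq b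
  have hp0 : p.leadingCoeff ≠ 0 := leadingCoeff_ne_zero.mpr (ne_zero_of_natDegree_gt hp)
  rw [← neg_mul, exp_mul_I, exp_mul_I, cos_neg, sin_neg, ← ofReal_cos, ← ofReal_sin, hb,
    ofReal_zero, zero_add, zero_add]
  refine natDegree_shiftSum_of_add_eq_zero _ _ _ _ (by ring) ?_
  rw [show (Real.sin b * I - -(Real.sin b : ℂ) * I) * p.natDegree * (I * a) *
      p.leadingCoeff = -2 * Real.sin b * a * p.natDegree * p.leadingCoeff by
    linear_combination (2 * Real.sin b * a * p.natDegree * p.leadingCoeff : ℂ) * I_sq]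
  have hsa : -2 * (Real.sin b : ℂ) * a ≠ 0 :=
    mul_ne_zero (mul_ne_zero (by norm_num) (ofReal_ne_zero.mpr hsin)) (ofReal_ne_zero.mpr ha)
  exact mul_ne_zero (mul_ne_zero hsa (Nat.cast_ne_zero.mpr hp.ne')) hp0

end Polynomial

theorem shifted_sum_poly_real_rooted_degree (G : Polynomial ℝ)
    (hroots : ∀ z : ℂ, (G.map (algebraMap ℝ ℂ)).eval z = 0 → z.im = 0)
    (n : ℕ) (hdeg : G.natDegree = n) (hn : 1 ≤ n)
    (a b : ℝ) (ha : 0 < a) :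
    let H : Polynomial ℂ :=
      Polynomial.C (Complex.exp (-(b * I))) *
          (G.map (algebraMap ℝ ℂ)).comp (Polynomial.X - Polynomial.C (I * a))
        + Polynomial.C (Complex.exp (b * I)) *
          (G.map (algebraMap ℝ ℂ)).comp (Polynomial.X + Polynomial.C (I * a))
    (∀ k : ℕ, (H.coeff k).im = 0) ∧
    (∀ z : ℂ, H.eval z = 0 → z.im = 0) ∧
    (Real.cos b ≠ 0 → H.natDegree = n) ∧
    (Real.cos b = 0 → H.natDegree = n - 1) := by
  intro H
  set P := G.map (algebraMap ℝ ℂ)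
  have hH : H = shiftSum (exp (-(b * I))) (exp (b * I)) (I * a) P := rfl
  have hPdeg : P.natDegree = n := by rw [natDegree_map, hdeg]
  have hPpos : 0 < P.natDegree := hPdeg ▸ hn
  refine ⟨fun k => ?_, fun z hz => ?_, fun hcos => ?_, fun hcos => ?_⟩
  · rw [hH, show exp (b * I) = starRingEnd ℂ (exp (-(b * I))) by
      rw [← exp_conj, map_neg, map_mul, conj_ofReal, conj_I, mul_neg, neg_neg]]
    exact im_coeff_shiftSum_eq_zero G _ a k
  · exact im_eq_zero_of_eval_shiftSum_eq_zero hPpos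
      (fun r hr => hroots r (isRoot_of_mem_roots hr)) (exp_ne_zero _) (by simp [norm_exp])
      ha.ne' hz
  · rw [← hPdeg]
    exact natDegree_shiftSum_exp_of_cos_ne_zero (ne_zero_of_natDegree_gt hPpos) _ hcos
  · rw [← hPdeg]
    exact natDegree_shiftSum_exp_of_cos_eq_zero hPpos ha.ne' hcos
end

section
/- Let G be a real polynomial with only real zeros, with deg G ≥ 2, and let A, a₁, a₂ > 0. If complex numbers x₁, x₂ satisfy G(iA - ia₁ - ia₂) + G(iA - ia₁ + ia₂)x₂ + G(iA + ia₁ - ia₂)x₁ + G(iA + ia₁ + ia₂)x₁x₂ = 0 and |x₁| ≥ 1, then |x₂| < 1. -/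
/-!
Factor `G = c ∏ (X - r)` over its real roots. Each factor contributes, coefficientwise, the
polynomial `(iA - r)(1 + u)(1 + v) + i a₁ (1 - u)(1 + v) + i a₂ (1 + u)(1 - v)` in `u = 1/x₁`,
`v = 1/x₂`, whose only zero on the closed unit bidisk is `(-1, -1)`. The coefficientwise product
of two such polynomials has no zeros on the closed bidisk at all: for fixed `u` this is an
inequality `‖d‖ < ‖a‖` between coefficients of an affine polynomial in `v`, and the parallelogram
law deduces it from affine inequalities obtained at `v = ± i`, where both factors are zero-free.
Since `deg G ≥ 2`, the product over all roots is zero-free on the closed bidisk, which is the claim.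
-/

open Complex Polynomial

namespace BidiskStability

lemma norm_lt_norm_iff_forall_add_mul_ne_zero {α β : ℂ} :
    ‖β‖ < ‖α‖ ↔ ∀ x : ℂ, ‖x‖ ≤ 1 → α + β * x ≠ 0 := by
  constructor
  · intro h x hx h0
    have : ‖α‖ ≤ ‖β‖ := by
      rw [eq_neg_of_add_eq_zero_left h0, norm_neg, norm_mul]
      exact mul_le_of_le_one_right (norm_nonneg β) hx
    linarith
  · intro h
    by_contra! hle
    rcases eq_or_ne β 0 with rfl | hβ
    · exact h 0 (by simp) (by simpa using hle)
    · refine h (-(α / β)) ?_ (by field_simp; ring)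
      rw [norm_neg, norm_div]
      exact div_le_one_of_le₀ hle (norm_nonneg β)

lemma norm_le_norm_of_forall_add_mul_ne_zero {α β : ℂ}
    (h : ∀ x : ℂ, ‖x‖ < 1 → α + β * x ≠ 0) : ‖β‖ ≤ ‖α‖ := by
  by_contra! hlt
  have hβ : β ≠ 0 := norm_pos_iff.mp ((norm_nonneg α).trans_lt hlt)
  refine h (-(α / β)) ?_ (by field_simp; ring)
  rw [norm_neg, norm_div]
  exact (div_lt_one (norm_pos_iff.mpr hβ)).mpr hlt

lemma mul_add_mul_mul_ne_zero {α₁ β₁ α₂ β₂ : ℂ}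
    (h₁ : ∀ x : ℂ, ‖x‖ ≤ 1 → α₁ + β₁ * x ≠ 0) (h₂ : ∀ x : ℂ, ‖x‖ < 1 → α₂ + β₂ * x ≠ 0)
    {x : ℂ} (hx : ‖x‖ ≤ 1) : α₁ * α₂ + β₁ * β₂ * x ≠ 0 := by
  have hlt := norm_lt_norm_iff_forall_add_mul_ne_zero.mpr h₁
  have hle := norm_le_norm_of_forall_add_mul_ne_zero h₂
  have hα₂ : 0 < ‖α₂‖ := norm_pos_iff.mpr (by simpa using h₂ 0 (by simp))
  refine norm_lt_norm_iff_forall_add_mul_ne_zero.mp ?_ x hx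
  rw [norm_mul, norm_mul]
  exact mul_lt_mul_of_lt_of_le_of_nonneg_of_pos hlt hle (norm_nonneg _) hα₂

lemma norm_lt_norm_of_antipodal {a b c d w : ℂ} (hw : ‖w‖ = 1)
    (h₁ : ∀ s ∈ ({w, -w} : Set ℂ), ‖b + d * s‖ ≤ ‖a + c * s‖)
    (h₂ : ∀ s ∈ ({w, -w} : Set ℂ), ‖c + d * s‖ < ‖a + b * s‖) : ‖d‖ < ‖a‖ := by
  have parallelogram (x y : ℂ) : ‖x + y * w‖ ^ 2 + ‖x + y * -w‖ ^ 2 = 2 * (‖x‖ ^ 2 + ‖y‖ ^ 2) := by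
    rw [mul_neg, ← sub_eq_add_neg, parallelogram_law_with_norm ℂ, norm_mul, hw, mul_one]
  have sq_le {s} (hs : s ∈ ({w, -w} : Set ℂ)) := pow_le_pow_left₀ (norm_nonneg _) (h₁ s hs) 2
  have sq_lt {s} (hs : s ∈ ({w, -w} : Set ℂ)) :=
    pow_lt_pow_left₀ (h₂ s hs) (norm_nonneg _) two_ne_zero
  have := sq_le (s := w) (by simp)
  have := sq_le (s := -w) (by simp)
  have := sq_lt (s := w) (by simp)
  have := sq_lt (s := -w) (by simp)
  have := parallelogram b d
  have := parallelogram a c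
  have := parallelogram c d
  have := parallelogram a b
  exact lt_of_pow_lt_pow_left₀ 2 (norm_nonneg a) (by linarith)

def ZeroFreeOnClosedBidisk (a b c d : ℂ) : Prop :=
  ∀ u v : ℂ, ‖u‖ ≤ 1 → ‖v‖ ≤ 1 → a + b * u + c * v + d * (u * v) ≠ 0

def ZeroFreeOnPuncturedBidisk (a b c d : ℂ) : Prop :=
  ∀ u v : ℂ, ‖u‖ ≤ 1 → ‖v‖ ≤ 1 → (u, v) ≠ (-1, -1) → a + b * u + c * v + d * (u * v) ≠ 0

lemma ZeroFreeOnClosedBidisk.zeroFreeOnPuncturedBidisk {a b c d : ℂ}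
    (h : ZeroFreeOnClosedBidisk a b c d) : ZeroFreeOnPuncturedBidisk a b c d :=
  fun u v hu hv _ => h u v hu hv

lemma ZeroFreeOnClosedBidisk.const_mul {a b c d : ℂ} (h : ZeroFreeOnClosedBidisk a b c d)
    {k : ℂ} (hk : k ≠ 0) : ZeroFreeOnClosedBidisk (k * a) (k * b) (k * c) (k * d) := by
  intro u v hu hv h0
  exact mul_ne_zero hk (h u v hu hv) (by linear_combination h0)

lemma ZeroFreeOnPuncturedBidisk.slice_ne_zero {a b c d : ℂ}
    (h : ZeroFreeOnPuncturedBidisk a b c d) {u v : ℂ} (hu : ‖u‖ ≤ 1) (hv : ‖v‖ ≤ 1)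
    (huv : (u, v) ≠ (-1, -1)) :
    (a + c * v) + (b + d * v) * u ≠ 0 := by
  have := h u v hu hv huv
  contrapose! this
  linear_combination this

lemma ZeroFreeOnPuncturedBidisk.mul {a b c d a' b' c' d' : ℂ}
    (hP : ZeroFreeOnPuncturedBidisk a b c d) (hQ : ZeroFreeOnPuncturedBidisk a' b' c' d') :
    ZeroFreeOnClosedBidisk (a * a') (b * b') (c * c') (d * d') := by
  intro u v hu hv
  have hI : ∀ s ∈ ({I, -I} : Set ℂ), ‖s‖ ≤ 1 ∧ s ≠ -1 := by
    rintro s (rfl | rfl) <;> refine ⟨by simp, fun h => ?_⟩ <;> simpa using congrArg im h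
  -- Both antipodal bounds read `(a + c z)(a' + c' s) + (b + d z)(b' + d' s) u ≠ 0` as a statement
  -- about one of `z`, `s`, with the other one in `{i, -i}`.
  have key : ‖c * c' + d * d' * u‖ < ‖a * a' + b * b' * u‖ := by
    refine norm_lt_norm_of_antipodal (b := c * a' + d * b' * u) (c := a * c' + b * d' * u)
      norm_I (fun s hs => ?_) (fun s hs => ?_)
    · refine norm_le_norm_of_forall_add_mul_ne_zero fun z hz => ?_
      have hz1 : z ≠ -1 := by rintro rfl; simp at hz
      have := mul_add_mul_mul_ne_zero (fun x hx => hP.slice_ne_zero hx hz.le (by simp [hz1]))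
        (fun x hx => hQ.slice_ne_zero hx.le (hI s hs).1 (by simp [(hI s hs).2])) hu
      contrapose! this
      linear_combination this
    · refine norm_lt_norm_iff_forall_add_mul_ne_zero.mpr fun z hz => ?_
      have := mul_add_mul_mul_ne_zero
        (fun x hx => hP.slice_ne_zero hx (hI s hs).1 (by simp [(hI s hs).2]))
        (fun x hx => hQ.slice_ne_zero hx.le hz (by rintro ⟨rfl, -⟩; simp at hx)) hu
      contrapose! this
      linear_combination this
  have := norm_lt_norm_iff_forall_add_mul_ne_zero.mp key v hv
  contrapose! this
  linear_combination this

lemma zeroFreeOnPuncturedBidisk_of_im_pos {ζ : ℂ} (hζ : 0 < ζ.im) {a₁ a₂ : ℝ} (ha₁ : 0 < a₁)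
    (ha₂ : 0 < a₂) :
    ZeroFreeOnPuncturedBidisk (ζ + I * a₁ + I * a₂) (ζ - I * a₁ + I * a₂)
      (ζ + I * a₁ - I * a₂) (ζ - I * a₁ - I * a₂) := by
  intro u v hu hv huv
  rcases eq_or_ne v (-1) with rfl | hv1
  · have hu1 : u ≠ -1 := by rintro rfl; exact huv rfl
    have hI : (2 * I * a₂ : ℂ) ≠ 0 := by simp [ha₂.ne']
    have h1u : 1 + u ≠ 0 := fun h => hu1 (by linear_combination h)
    convert mul_ne_zero hI h1u using 1
    ring
  · set α := (ζ + I * a₁ + I * a₂) + (ζ + I * a₁ - I * a₂) * v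
    set β := (ζ - I * a₁ + I * a₂) + (ζ - I * a₁ - I * a₂) * v
    -- With `X = ζ (1 + v) + i a₂ (1 - v)` and `Y = i a₁ (1 + v)` one has `α = X + Y`, `β = X - Y`.
    have hdiff : ‖α‖ ^ 2 - ‖β‖ ^ 2 = 4 * a₁ * (ζ.im * ‖1 + v‖ ^ 2 + a₂ * (1 - ‖v‖ ^ 2)) := by
      simp only [α, β, Complex.sq_norm, normSq_apply, add_re, add_im, sub_re, sub_im, mul_re,
        mul_im, I_re, I_im, ofReal_re, ofReal_im, one_re, one_im]
      ring
    have h1v : 0 < ‖1 + v‖ := norm_pos_iff.mpr fun h => hv1 (by linear_combination h)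
    have hv2 : ‖v‖ ^ 2 ≤ 1 := pow_le_one₀ (norm_nonneg v) hv
    have hlt : ‖β‖ < ‖α‖ := lt_of_pow_lt_pow_left₀ 2 (norm_nonneg α) (by
      have : 0 < ζ.im * ‖1 + v‖ ^ 2 + a₂ * (1 - ‖v‖ ^ 2) := by
        have := mul_nonneg ha₂.le (sub_nonneg.mpr hv2)
        positivity
      nlinarith)
    have := norm_lt_norm_iff_forall_add_mul_ne_zero.mp hlt u hu
    contrapose! this
    linear_combination this

section MultisetProd

variable {ι : Type*} (a b c d : ι → ℂ)

lemma zeroFreeOnPuncturedBidisk_multiset_prod {s : Multiset ι}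
    (h : ∀ i ∈ s, ZeroFreeOnPuncturedBidisk (a i) (b i) (c i) (d i)) (hs : s ≠ 0) :
    ZeroFreeOnPuncturedBidisk (s.map a).prod (s.map b).prod (s.map c).prod (s.map d).prod := by
  induction s using Multiset.induction_on with
  | empty => exact absurd rfl hs
  | cons i t ih =>
    simp only [Multiset.map_cons, Multiset.prod_cons]
    rcases eq_or_ne t 0 with rfl | ht
    · simpa using h i (Multiset.mem_cons_self i 0)
    · exact ((h i (Multiset.mem_cons_self i t)).mul
        (ih (fun j hj => h j (Multiset.mem_cons_of_mem hj)) ht)).zeroFreeOnPuncturedBidisk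

lemma zeroFreeOnClosedBidisk_multiset_prod {s : Multiset ι}
    (h : ∀ i ∈ s, ZeroFreeOnPuncturedBidisk (a i) (b i) (c i) (d i)) (hs : 2 ≤ s.card) :
    ZeroFreeOnClosedBidisk (s.map a).prod (s.map b).prod (s.map c).prod (s.map d).prod := by
  obtain ⟨i, hi⟩ := Multiset.card_pos_iff_exists_mem.mp (by omega : 0 < s.card)
  obtain ⟨t, rfl⟩ := Multiset.exists_cons_of_mem hi
  have ht : t ≠ 0 := by rintro rfl; simp at hs
  simp only [Multiset.map_cons, Multiset.prod_cons]
  exact (h i hi).mul (zeroFreeOnPuncturedBidisk_multiset_prod a b c d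
    (fun j hj => h j (Multiset.mem_cons_of_mem hj)) ht)

end MultisetProd

lemma ZeroFreeOnClosedBidisk.norm_lt_one_of_eq_zero {a b c d x₁ x₂ : ℂ}
    (h : ZeroFreeOnClosedBidisk a b c d) (hx : d + b * x₂ + c * x₁ + a * x₁ * x₂ = 0)
    (hx₁ : 1 ≤ ‖x₁‖) : ‖x₂‖ < 1 := by
  by_contra! hx₂
  have h₁ : x₁ ≠ 0 := norm_pos_iff.mp (by linarith)
  have h₂ : x₂ ≠ 0 := norm_pos_iff.mp (by linarith)
  refine h x₁⁻¹ x₂⁻¹ (by simpa using inv_le_one_of_one_le₀ hx₁)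
    (by simpa using inv_le_one_of_one_le₀ hx₂) ?_
  field_simp
  linear_combination hx

end BidiskStability

lemma Polynomial.exists_eval_map_eq_leadingCoeff_mul_prod {G : ℝ[X]}
    (hroots : ∀ z : ℂ, (G.map (algebraMap ℝ ℂ)).eval z = 0 → z.im = 0) :
    ∃ S : Multiset ℝ, S.card = G.natDegree ∧
      ∀ w : ℂ, (G.map (algebraMap ℝ ℂ)).eval w =
        G.leadingCoeff * (S.map fun r : ℝ => w - r).prod := by
  set f := G.map (algebraMap ℝ ℂ)
  have hsplit : f.Splits := IsAlgClosed.splits f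
  refine ⟨f.roots.map re, ?_, fun w => ?_⟩
  · rw [Multiset.card_map, splits_iff_card_roots.mp hsplit, natDegree_map]
  · conv_lhs => rw [hsplit.eq_prod_roots]
    rw [eval_mul, eval_C, eval_multiset_prod, leadingCoeff_map, Multiset.map_map,
      Multiset.map_map]
    congr 2
    refine Multiset.map_congr rfl fun z hz => ?_
    have hz : z.im = 0 := hroots z (mem_roots'.mp hz).2
    simp [Complex.ext_iff, hz]

open BidiskStability in
theorem P2_key_proposition (G : Polynomial ℝ)
    (hroots : ∀ z : ℂ, (G.map (algebraMap ℝ ℂ)).eval z = 0 → z.im = 0)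
    (hdeg : 2 ≤ G.natDegree)
    (A a₁ a₂ : ℝ) (hA : 0 < A) (ha₁ : 0 < a₁) (ha₂ : 0 < a₂)
    (x₁ x₂ : ℂ)
    (hx : (G.map (algebraMap ℝ ℂ)).eval (I * A - I * a₁ - I * a₂)
        + (G.map (algebraMap ℝ ℂ)).eval (I * A - I * a₁ + I * a₂) * x₂
        + (G.map (algebraMap ℝ ℂ)).eval (I * A + I * a₁ - I * a₂) * x₁
        + (G.map (algebraMap ℝ ℂ)).eval (I * A + I * a₁ + I * a₂) * x₁ * x₂ = 0)
    (hx₁ : 1 ≤ ‖x₁‖) :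
    ‖x₂‖ < 1 := by
  obtain ⟨S, hcard, heval⟩ := exists_eval_map_eq_leadingCoeff_mul_prod hroots
  have hlc : (G.leadingCoeff : ℂ) ≠ 0 := by
    have : G ≠ 0 := by rintro rfl; simp at hdeg
    exact_mod_cast leadingCoeff_ne_zero.mpr this
  have hfactor (r : ℝ) : ZeroFreeOnPuncturedBidisk
      (I * A + I * a₁ + I * a₂ - r) (I * A - I * a₁ + I * a₂ - r)
      (I * A + I * a₁ - I * a₂ - r) (I * A - I * a₁ - I * a₂ - r) := by
    convert zeroFreeOnPuncturedBidisk_of_im_pos (ζ := I * A - r) (by simpa using hA) ha₁ ha₂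
      using 1 <;> ring
  have hG := (zeroFreeOnClosedBidisk_multiset_prod _ _ _ _ (fun r _ => hfactor r)
    (hcard ▸ hdeg)).const_mul hlc
  simp only [← heval] at hG
  exact hG.norm_lt_one_of_eq_zero hx hx₁
end

section
/- Let G be a real polynomial with only real zeros and deg G ≥ 2, and let a₁, a₂ > 0. Then all roots of the polynomial P(t) = G(-ia₁ - ia₂) + (G(-ia₁ + ia₂) + G(ia₁ - ia₂))·t + G(ia₁ + ia₂)·t² lie on the unit circle |t| = 1. -/
open Complex Polynomial

lemma multiset_prod_map_le {M : Multiset ℂ} (f g : ℂ → ℝ) (h0 : ∀ x, 0 ≤ f x)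
    (hle : ∀ x ∈ M, f x ≤ g x) : (M.map f).prod ≤ (M.map g).prod := by
  induction M using Multiset.induction with
  | empty => simp
  | cons a s ih =>
    simp only [Multiset.map_cons, Multiset.prod_cons]
    have h1 : (s.map f).prod ≤ (s.map g).prod := ih fun x hx => hle x (Multiset.mem_cons_of_mem hx)
    have h2 : (0:ℝ) ≤ (s.map f).prod := Multiset.prod_nonneg (by
      intro x hx; obtain ⟨y, _, rfl⟩ := Multiset.mem_map.mp hx; exact h0 y)
    have h3 : f a ≤ g a := hle a (Multiset.mem_cons_self a s)
    exact mul_le_mul h3 h1 h2 ((h0 a).trans h3)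

lemma abs_eval_mono (Q : Polynomial ℂ) (hroots : ∀ z : ℂ, Q.eval z = 0 → z.im = 0)
    (s₁ s₂ : ℝ) (h : |s₁| ≤ |s₂|) :
    ‖Q.eval (I * s₁)‖ ≤ ‖Q.eval (I * s₂)‖ := by
  have hsq : s₁ ^ 2 ≤ s₂ ^ 2 := by
    have := pow_le_pow_left₀ (abs_nonneg s₁) h 2
    rwa [_root_.sq_abs, _root_.sq_abs] at this
  have hsplit : Q.Splits := IsAlgClosed.splits Q
  rw [hsplit.eval_eq_prod_roots,
      hsplit.eval_eq_prod_roots]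
  simp only [norm_mul]
  gcongr
  have hn : ∀ m : Multiset ℂ, ‖m.prod‖ = (m.map (fun x => ‖x‖)).prod :=
    fun m => map_multiset_prod normHom m
  rw [hn, hn,
      Multiset.map_map, Multiset.map_map]
  apply multiset_prod_map_le
  · intro x; exact norm_nonneg _
  · intro r hr
    have hQ0 : Q ≠ 0 := by intro h0; simp [h0] at hr
    have him : r.im = 0 := hroots r ((Polynomial.mem_roots hQ0).mp hr)
    simp only [Function.comp_apply, Complex.norm_def]
    apply Real.sqrt_le_sqrt
    simp [Complex.normSq_apply, him]
    nlinarith [hsq]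

lemma quad_roots_on_circle (c t : ℂ) (b : ℝ) (hc : c ≠ 0)
    (hb : |b| ≤ 2 * ‖c‖)
    (heq : (starRingEnd ℂ) c + (b : ℂ) * t + c * t ^ 2 = 0) :
    ‖t‖ = 1 := by
  set w : ℂ := 2 * c * t + (b : ℂ) with hw
  have hw2 : w ^ 2 = ((b ^ 2 - 4 * Complex.normSq c : ℝ) : ℂ) := by
    have hcc : c * (starRingEnd ℂ) c = (Complex.normSq c : ℂ) := Complex.mul_conj c
    push_cast
    linear_combination (4 * c) * heq - 4 * hcc
  have him : w.re * w.im + w.im * w.re = 0 := by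
    have := congrArg Complex.im hw2
    simpa [pow_two, Complex.mul_im] using this
  have hre2 : w.re * w.re - w.im * w.im = b ^ 2 - 4 * Complex.normSq c := by
    have := congrArg Complex.re hw2
    simpa [pow_two, Complex.mul_re] using this
  have hD : b ^ 2 - 4 * Complex.normSq c ≤ 0 := by
    have h1 : b ^ 2 ≤ (2 * ‖c‖) ^ 2 := by
      have := pow_le_pow_left₀ (abs_nonneg b) hb 2
      rwa [_root_.sq_abs] at this
    have h2 : ‖c‖ ^ 2 = Complex.normSq c := Complex.sq_norm c
    nlinarith
  have hre : w.re = 0 := by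
    have h0 : w.re ^ 2 = 0 := by nlinarith [sq_nonneg w.re, sq_nonneg w.im]
    exact pow_eq_zero_iff two_ne_zero |>.mp h0
  have hnt : Complex.normSq (2 * c * t) = 4 * Complex.normSq c := by
    have h1 : 2 * c * t = w - (b : ℂ) := by rw [hw]; ring
    rw [h1, Complex.normSq_apply]
    simp [Complex.sub_re, Complex.sub_im, hre]
    nlinarith [hre2, hre]
  have hc0 : Complex.normSq c ≠ 0 := by
    simpa [Complex.normSq_eq_zero] using hc
  have hnt2 : Complex.normSq t = 1 := by
    have hm : Complex.normSq (2 * c * t) = 4 * Complex.normSq c * Complex.normSq t := by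
      rw [map_mul, map_mul]
      norm_num [Complex.normSq_apply]
    have h4 : (4 * Complex.normSq c) * Complex.normSq t = (4 * Complex.normSq c) * 1 := by
      rw [mul_one]; linarith [hnt, hm]
    exact mul_left_cancel₀ (mul_ne_zero four_ne_zero hc0) h4
  rw [Complex.norm_def, hnt2, Real.sqrt_one]

theorem circle_theorem_n2 (G : Polynomial ℝ)
    (hroots : ∀ z : ℂ, (G.map (algebraMap ℝ ℂ)).eval z = 0 → z.im = 0)
    (hdeg : 2 ≤ G.natDegree)
    (a₁ a₂ : ℝ) (ha₁ : 0 < a₁) (ha₂ : 0 < a₂)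
    (t : ℂ)
    (ht : (G.map (algebraMap ℝ ℂ)).eval (-(I * a₁) - I * a₂)
        + ((G.map (algebraMap ℝ ℂ)).eval (-(I * a₁) + I * a₂)
            + (G.map (algebraMap ℝ ℂ)).eval (I * a₁ - I * a₂)) * t
        + (G.map (algebraMap ℝ ℂ)).eval (I * a₁ + I * a₂) * t ^ 2 = 0) :
    ‖t‖ = 1 := by
  set Gc := G.map (algebraMap ℝ ℂ) with hGc
  have hconj : ∀ z : ℂ, Gc.eval ((starRingEnd ℂ) z) = (starRingEnd ℂ) (Gc.eval z) := by
    intro z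
    rw [hGc, eval_map, eval_map, Polynomial.hom_eval₂]
    congr 1
    ext r
    simp [Complex.conj_ofReal]
  set c := Gc.eval (I * a₁ + I * a₂) with hc
  set u := Gc.eval (I * a₁ - I * a₂) with hu
  -- rewrite the two "conjugate" evaluation points
  have e1 : (-(I * (a₁:ℂ)) - I * a₂) = (starRingEnd ℂ) (I * a₁ + I * a₂) := by
    simp [map_add, map_mul, Complex.conj_I, Complex.conj_ofReal]; ring
  have e2 : (-(I * (a₁:ℂ)) + I * a₂) = (starRingEnd ℂ) (I * a₁ - I * a₂) := by
    simp [map_sub, map_mul, Complex.conj_I, Complex.conj_ofReal]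
  rw [e1, e2, hconj, hconj] at ht
  -- the middle coefficient is real
  have hb : (starRingEnd ℂ) u + u = ((2 * u.re : ℝ) : ℂ) := by
    rw [add_comm]
    exact Complex.add_conj u
  have hcne : c ≠ 0 := by
    intro h0
    have := hroots (I * a₁ + I * a₂) h0
    simp at this
    linarith
  -- |b| ≤ 2 |c|
  have hmono : ‖u‖ ≤ ‖c‖ := by
    have e3 : (I * (a₁:ℂ) - I * a₂) = I * ((a₁ - a₂ : ℝ) : ℂ) := by push_cast; ring
    have e4 : (I * (a₁:ℂ) + I * a₂) = I * ((a₁ + a₂ : ℝ) : ℂ) := by push_cast; ring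
    rw [hu, hc, e3, e4]
    apply abs_eval_mono Gc hroots
    rcases abs_cases (a₁ - a₂) with ⟨h, _⟩ | ⟨h, _⟩ <;>
      rw [h, abs_of_pos (by linarith)] <;> linarith
  have habsb : |2 * u.re| ≤ 2 * ‖c‖ := by
    rw [abs_mul, abs_of_pos (by norm_num : (0:ℝ) < 2)]
    have := Complex.abs_re_le_norm u
    nlinarith [abs_nonneg u.re]
  apply quad_roots_on_circle c t (2 * u.re) hcne habsb
  rw [← hb]
  linear_combination ht
end

section
/- Let G be a real polynomial with only real zeros and deg G ≥ n, let a₁, …, aₙ > 0 and A > 0. Define Pₙ(s; x₁, …, xₙ) = Σ_{S ⊆ {1,…,n}} G(s - Σ_{k ∉ S} i aₖ + Σ_{ℓ ∈ S} i a_ℓ) · Π_{ℓ ∈ S} x_ℓ. If Pₙ(iA; x₁, …, xₙ) = 0 and |x₁| ≥ 1, …, |x_{n-1}| ≥ 1, then |xₙ| < 1. -/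
open Complex Polynomial Finset

/-!
Peel off one variable at a time: with `t` the set of indices still present,
`P_{t ∪ {j}}(s) = P_t(s - i a_j) + x_j P_t(s + i a_j)`. If a nonconstant `p` has no zeros in the
open upper half-plane, then for `Im s > 0` every root `ρ` of `p` is strictly closer to `s - i a`
than to `s + i a`, so `|p(s - i a)| < |p(s + i a)|`, and `p(s - i a) + x p(s + i a)` again has no
zeros there as soon as `|x| ≥ 1`. Each step lowers the degree by at most one (and only when
`x = -1`), so `deg G ≥ n + 1` keeps every intermediate polynomial nonconstant. Hence if all
`|x_k| ≥ 1`, then `Pₙ` does not vanish at `iA`.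
-/

namespace Polynomial

variable {R : Type*}

theorem coeff_taylor_natDegree_sub_one_s8 [CommSemiring R] (f : R[X]) (r : R) :
    (taylor r f).coeff (f.natDegree - 1) =
      f.coeff (f.natDegree - 1) + f.natDegree * f.leadingCoeff * r := by
  rcases hd : f.natDegree with _ | d
  · rw [eq_C_of_natDegree_eq_zero hd]
    simp
  · have hlin : (hasseDeriv d f).natDegree < 2 :=
      (natDegree_hasseDeriv_le f d).trans_lt (by omega)
    rw [Nat.add_sub_cancel, taylor_coeff, eval_eq_sum_range' hlin, sum_range_succ, sum_range_one,
      hasseDeriv_coeff, hasseDeriv_coeff, leadingCoeff, hd]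
    simp [Nat.choose_succ_self_right, add_comm 1 d]

theorem natDegree_sub_one_le_natDegree_taylor_neg_add [CommRing R] [IsDomain R] [CharZero R]
    (p : R[X]) {c : R} (hc : c ≠ 0) (x : R) :
    p.natDegree - 1 ≤ (taylor (-c) p + C x * taylor c p).natDegree := by
  rcases Nat.eq_zero_or_pos p.natDegree with hd | hd
  · simp [hd]
  have hp : p.leadingCoeff ≠ 0 := leadingCoeff_ne_zero.2 (ne_zero_of_natDegree_gt hd)
  by_cases hx : x = -1
  · apply le_natDegree_of_ne_zero
    rw [coeff_add, coeff_C_mul, coeff_taylor_natDegree_sub_one_s8,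
      coeff_taylor_natDegree_sub_one_s8, hx]
    intro h
    have h2 : 2 * (p.natDegree * p.leadingCoeff * c) = 0 := by linear_combination -h
    simp [hd.ne', hp, hc] at h2
  · refine (Nat.sub_le _ _).trans (le_natDegree_of_ne_zero ?_)
    rw [coeff_add, coeff_C_mul, coeff_taylor_natDegree, coeff_taylor_natDegree,
      ← one_add_mul]
    refine mul_ne_zero ?_ hp
    contrapose! hx
    linear_combination hx

end Polynomial

theorem norm_sub_mul_I_sub_lt_norm_add_mul_I_sub {s ρ : ℂ} {a : ℝ} (ha : 0 < a) (hs : 0 < s.im)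
    (hρ : ρ.im ≤ 0) : ‖s - a * I - ρ‖ < ‖s + a * I - ρ‖ := by
  rw [← sq_lt_sq₀ (norm_nonneg _) (norm_nonneg _), Complex.sq_norm, Complex.sq_norm,
    normSq_apply, normSq_apply]
  simp only [sub_re, add_re, sub_im, add_im, mul_re, mul_im, ofReal_re, ofReal_im, I_re, I_im]
  nlinarith

theorem norm_eval_sub_mul_I_lt_norm_eval_add_mul_I {p : ℂ[X]} (hdeg : 0 < p.natDegree)
    (hp : ∀ z : ℂ, 0 < z.im → p.eval z ≠ 0) {s : ℂ} (hs : 0 < s.im) {a : ℝ} (ha : 0 < a) :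
    ‖p.eval (s - a * I)‖ < ‖p.eval (s + a * I)‖ := by
  have hup : 0 < (s + a * I).im := by simpa using add_pos hs ha
  by_cases hzero : p.eval (s - a * I) = 0
  · simpa [hzero] using hp _ hup
  have hsplit : p.Splits := IsAlgClosed.splits p
  have hroots : p.roots ≠ 0 := by
    rw [← Multiset.card_pos, IsAlgClosed.card_roots_eq_natDegree]
    exact hdeg
  have hlc : 0 < ‖p.leadingCoeff‖ := by
    simpa using ne_zero_of_natDegree_gt hdeg
  have hnorm (w : ℂ) : ‖p.eval w‖ = ‖p.leadingCoeff‖ * (p.roots.map fun ρ => ‖w - ρ‖).prod := by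
    rw [hsplit.eval_eq_prod_roots, norm_mul, ← normHom_apply (Multiset.prod _),
      map_multiset_prod, Multiset.map_map]
    rfl
  rw [hnorm, hnorm]
  refine mul_lt_mul_of_pos_left (Multiset.prod_map_lt_prod_map hroots _ _ ?_ ?_) hlc
  · intro ρ hρ
    simp only [norm_pos_iff, sub_ne_zero]
    rintro rfl
    exact hzero (isRoot_of_mem_roots hρ)
  · intro ρ hρ
    exact norm_sub_mul_I_sub_lt_norm_add_mul_I_sub ha hs
      (not_lt.1 fun h => hp ρ h (isRoot_of_mem_roots hρ))

theorem eval_taylor_neg_add_ne_zero {p : ℂ[X]} (hdeg : 0 < p.natDegree)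
    (hp : ∀ z : ℂ, 0 < z.im → p.eval z ≠ 0) {a : ℝ} (ha : 0 < a) {x : ℂ} (hx : 1 ≤ ‖x‖)
    {z : ℂ} (hz : 0 < z.im) : (taylor (-(a * I)) p + C x * taylor (a * I) p).eval z ≠ 0 := by
  rw [eval_add, eval_mul, eval_C, taylor_eval, taylor_eval, ← sub_eq_add_neg]
  intro h
  rw [add_eq_zero_iff_eq_neg] at h
  have hlt := norm_eval_sub_mul_I_lt_norm_eval_add_mul_I hdeg hp hz ha
  rw [h, norm_neg, norm_mul] at hlt
  nlinarith [norm_nonneg (p.eval (z + a * I))]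

section

variable {ι : Type*} [DecidableEq ι]

/-- The paper's `Pₙ(s; x)` for the polynomial `p`, with `S` ranging over the subsets of `t`. -/
def shiftedSubsetSum (p : ℂ[X]) (a : ι → ℝ) (x : ι → ℂ) (t : Finset ι) (s : ℂ) : ℂ :=
  ∑ S ∈ t.powerset,
    p.eval (s - I * ∑ k ∈ t \ S, (a k : ℂ) + I * ∑ ℓ ∈ S, (a ℓ : ℂ)) * ∏ ℓ ∈ S, x ℓ

theorem shiftedSubsetSum_insert (p : ℂ[X]) (a : ι → ℝ) (x : ι → ℂ) {j : ι} {t : Finset ι}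
    (hj : j ∉ t) (s : ℂ) :
    shiftedSubsetSum p a x (insert j t) s =
      shiftedSubsetSum p a x t (s - a j * I) + x j * shiftedSubsetSum p a x t (s + a j * I) := by
  rw [shiftedSubsetSum, sum_powerset_insert hj, shiftedSubsetSum, shiftedSubsetSum, mul_sum]
  congr 1
  · refine sum_congr rfl fun S hS => ?_
    have hjS : j ∉ t \ S := fun h => hj (mem_sdiff.1 h).1
    rw [insert_sdiff_of_notMem t fun h => hj (mem_powerset.1 hS h), sum_insert hjS]
    ring_nf
  · refine sum_congr rfl fun S hS => ?_
    have hjS : j ∉ S := fun h => hj (mem_powerset.1 hS h)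
    rw [insert_sdiff_insert, sdiff_insert_of_notMem hj, sum_insert hjS, prod_insert hjS]
    ring_nf

theorem exists_eval_eq_shiftedSubsetSum {p : ℂ[X]} (hp : ∀ z : ℂ, 0 < z.im → p.eval z ≠ 0)
    {a : ι → ℝ} (ha : ∀ k, 0 < a k) {x : ι → ℂ} {t : Finset ι} (hx : ∀ k ∈ t, 1 ≤ ‖x k‖)
    (ht : #t ≤ p.natDegree) :
    ∃ q : ℂ[X], (∀ s, q.eval s = shiftedSubsetSum p a x t s) ∧
      p.natDegree - #t ≤ q.natDegree ∧ ∀ z : ℂ, 0 < z.im → q.eval z ≠ 0 := by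
  induction t using Finset.induction_on with
  | empty => exact ⟨p, by simp [shiftedSubsetSum], by simp, hp⟩
  | @insert j t hj ih =>
    rw [card_insert_of_notMem hj] at ht ⊢
    obtain ⟨q, hq_eval, hq_deg, hq⟩ := ih (fun k hk => hx k (mem_insert_of_mem hk)) (by omega)
    have hc : (a j * I : ℂ) ≠ 0 := mul_ne_zero (ofReal_ne_zero.2 (ha j).ne') I_ne_zero
    refine ⟨taylor (-(a j * I)) q + C (x j) * taylor (a j * I) q, fun s => ?_, ?_,
      fun z hz => eval_taylor_neg_add_ne_zero (by omega) hq (ha j) (hx j (mem_insert_self j t)) hz⟩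
    · rw [shiftedSubsetSum_insert p a x hj, ← hq_eval, ← hq_eval, eval_add, eval_mul, eval_C,
        taylor_eval, taylor_eval, sub_eq_add_neg]
    · have := natDegree_sub_one_le_natDegree_taylor_neg_add q hc (x j)
      omega

theorem shiftedSubsetSum_ne_zero {p : ℂ[X]} (hp : ∀ z : ℂ, 0 < z.im → p.eval z ≠ 0)
    {a : ι → ℝ} (ha : ∀ k, 0 < a k) {x : ι → ℂ} {t : Finset ι} (hx : ∀ k ∈ t, 1 ≤ ‖x k‖)
    (ht : #t ≤ p.natDegree) {s : ℂ} (hs : 0 < s.im) : shiftedSubsetSum p a x t s ≠ 0 := by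
  obtain ⟨q, hq_eval, -, hq⟩ := exists_eval_eq_shiftedSubsetSum hp ha hx ht
  exact hq_eval s ▸ hq s hs

end

theorem Pn_key_proposition_pos (n : ℕ) (G : Polynomial ℝ)
    (hroots : ∀ z : ℂ, (G.map (algebraMap ℝ ℂ)).eval z = 0 → z.im = 0)
    (hdeg : n + 1 ≤ G.natDegree)
    (a : Fin (n + 1) → ℝ) (ha : ∀ k, 0 < a k)
    (A : ℝ) (hA : 0 < A)
    (x : Fin (n + 1) → ℂ)
    (hP : ∑ S : Finset (Fin (n + 1)),
        (G.map (algebraMap ℝ ℂ)).eval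
          (I * A - I * (∑ k ∈ Sᶜ, (a k : ℂ)) + I * (∑ ℓ ∈ S, (a ℓ : ℂ)))
        * ∏ ℓ ∈ S, x ℓ = 0)
    (hx : ∀ k : Fin n, 1 ≤ ‖x k.castSucc‖) :
    ‖x (Fin.last n)‖ < 1 := by
  by_contra! hlast
  have hx_all : ∀ k ∈ (univ : Finset (Fin (n + 1))), 1 ≤ ‖x k‖ :=
    fun k _ => Fin.lastCases hlast hx k
  have hG : ∀ z : ℂ, 0 < z.im → (G.map (algebraMap ℝ ℂ)).eval z ≠ 0 :=
    fun z hz h => hz.ne' (hroots z h)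
  have hcard : #(univ : Finset (Fin (n + 1))) ≤ (G.map (algebraMap ℝ ℂ)).natDegree := by
    simpa [natDegree_map] using hdeg
  refine shiftedSubsetSum_ne_zero hG ha hx_all hcard (s := I * A) (by simpa using hA) ?_
  simpa [shiftedSubsetSum, compl_eq_univ_sdiff] using hP
end

section
/- Let G be a real polynomial with only real zeros and deg G ≥ n ≥ 1, and let a₁,…,aₙ > 0. Then all roots of the one-variable polynomial Pₙ(t) = Σ_σ G(σ·(ia₁,…,iaₙ)) t^{|σ|}, where the sum is over all sign vectors σ ∈ {±1}ⁿ and |σ| is the number of +1 entries of σ, lie on the unit circle. -/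
open Complex Polynomial Finset

/-!
Put `F z = G (i z)`, whose zeros lie on the imaginary axis, and
`Q s = ∑_σ F (s + ∑ σₖ aₖ) ∏ₖ w(σₖ)` with weight `u` for `σₖ = +1` and `v` for `σₖ = -1`,
so that `Pₙ(t) = Q 0` for `(u, v) = (t, 1)`. Summing out `σ₁` replaces `F` by
`u F(s + a₁) + v F(s - a₁)`. If all zeros `z` of `F` satisfy `re z ≤ 0` and `re s ≥ 0`, then
`|s - a - z| ≤ |s + a - z|` for every root factor, so `|F(s - a)| ≤ |F(s + a)| ≠ 0`, and for
`|u| > |v|` the new polynomial has no zeros in `re s ≥ 0`. By induction `Pₙ(t) ≠ 0` for `|t| > 1`;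
for `|t| < 1` apply the same to `F(-z)`, which exchanges the roles of the two weights.
-/

theorem Complex.norm_sub_ofReal_le_norm_add_ofReal {w : ℂ} (hw : 0 ≤ w.re) {a : ℝ} (ha : 0 ≤ a) :
    ‖w - a‖ ≤ ‖w + a‖ := by
  rw [← sq_le_sq₀ (norm_nonneg _) (norm_nonneg _), Complex.sq_norm, Complex.sq_norm,
    normSq_apply, normSq_apply]
  simp only [sub_re, add_re, ofReal_re, sub_im, add_im, ofReal_im, sub_zero, add_zero]
  nlinarith [mul_nonneg hw ha]

namespace Polynomial

variable {F : ℂ[X]}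

theorem norm_eval_sub_le_norm_eval_add (hF : ∀ z, F.IsRoot z → z.re ≤ 0) {a : ℝ} (ha : 0 ≤ a)
    {s : ℂ} (hs : 0 ≤ s.re) : ‖F.eval (s - a)‖ ≤ ‖F.eval (s + a)‖ := by
  have hF_splits := IsAlgClosed.splits F
  rw [hF_splits.eval_eq_prod_roots, hF_splits.eval_eq_prod_roots, norm_mul, norm_mul]
  gcongr 1
  rw [← normHom_apply, ← normHom_apply, map_multiset_prod, map_multiset_prod, Multiset.map_map,
    Multiset.map_map]
  simp only [Function.comp_def, normHom_apply]
  refine Multiset.prod_map_le_prod_map₀ _ _ (fun _ _ => norm_nonneg _) fun z hz => ?_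
  have hz_re : z.re ≤ 0 := hF z (isRoot_of_mem_roots hz)
  simpa only [sub_right_comm, sub_add_eq_add_sub] using
    Complex.norm_sub_ofReal_le_norm_add_ofReal (w := s - z) (by simp only [sub_re]; linarith) ha

noncomputable def signedShift (F : ℂ[X]) (u v : ℂ) (a : ℝ) : ℂ[X] :=
  C u * F.comp (X + C (a : ℂ)) + C v * F.comp (X - C (a : ℂ))

theorem re_lt_zero_of_isRoot_signedShift (hF : ∀ z, F.IsRoot z → z.re ≤ 0) {u v : ℂ}
    (huv : ‖v‖ < ‖u‖) {a : ℝ} (ha : 0 < a) {s : ℂ} (hs : (F.signedShift u v a).IsRoot s) :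
    s.re < 0 := by
  by_contra! hs_re
  have h_add : F.eval (s + a) ≠ 0 := fun h => by
    have := hF _ h
    simp only [add_re, ofReal_re] at this
    linarith
  have h_eq : u * F.eval (s + a) = -(v * F.eval (s - a)) := by
    simpa [signedShift, eval_comp, ← eq_neg_iff_add_eq_zero] using hs
  have h_norm := congrArg norm h_eq
  rw [norm_neg, norm_mul, norm_mul] at h_norm
  refine lt_irrefl _ <| calc
    ‖u‖ * ‖F.eval (s + a)‖ = ‖v‖ * ‖F.eval (s - a)‖ := h_norm
    _ ≤ ‖v‖ * ‖F.eval (s + a)‖ := by gcongr; exact norm_eval_sub_le_norm_eval_add hF ha.le hs_re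
    _ < ‖u‖ * ‖F.eval (s + a)‖ := by gcongr

noncomputable def signedShiftSum (F : ℂ[X]) (u v : ℂ) {n : ℕ} (a : Fin n → ℝ) (s : ℂ) : ℂ :=
  ∑ ε : Fin n → Bool,
    F.eval (s + ∑ k, (if ε k then (1 : ℂ) else -1) * a k) * ∏ k, if ε k then u else v

theorem signedShiftSum_fin_zero (F : ℂ[X]) (u v : ℂ) (a : Fin 0 → ℝ) (s : ℂ) :
    signedShiftSum F u v a s = F.eval s := by
  simp [signedShiftSum]

theorem signedShiftSum_succ (F : ℂ[X]) (u v : ℂ) {n : ℕ} (a : Fin (n + 1) → ℝ) (s : ℂ) :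
    signedShiftSum F u v a s = signedShiftSum (F.signedShift u v (a 0)) u v (Fin.tail a) s := by
  unfold signedShiftSum
  rw [← (Fin.consEquiv fun _ => Bool).sum_comp, Fintype.sum_prod_type, Fintype.sum_bool,
    ← Finset.sum_add_distrib]
  refine Finset.sum_congr rfl fun ε _ => ?_
  simp only [Fin.consEquiv_apply, Fin.sum_univ_succ, Fin.prod_univ_succ,
    Fin.cons_zero, Fin.cons_succ, signedShift, eval_add, eval_mul, eval_C, eval_comp, eval_X,
    eval_sub, Fin.tail, if_true, Bool.false_eq_true, if_false]
  set σ := ∑ k, (if ε k then (1 : ℂ) else -1) * (a k.succ : ℂ)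
  rw [show s + (1 * a 0 + σ) = s + σ + a 0 by ring, show s + (-1 * a 0 + σ) = s + σ - a 0 by ring]
  ring

theorem signedShiftSum_comp_neg_X (F : ℂ[X]) (u v : ℂ) {n : ℕ} (a : Fin n → ℝ) (s : ℂ) :
    signedShiftSum (F.comp (-X)) u v a (-s) = signedShiftSum F v u a s := by
  unfold signedShiftSum
  refine Fintype.sum_bijective (fun ε k => !ε k) ?_ _ _ fun ε => ?_
  · exact Function.Involutive.bijective fun ε => by simp
  · have hsign (b : Bool) : (if !b then (1 : ℂ) else -1) = -if b then 1 else -1 := by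
      cases b <;> simp
    have hweight (b : Bool) : (if !b then v else u) = if b then u else v := by cases b <;> rfl
    simp only [eval_comp, eval_neg, eval_X, hsign, hweight, neg_mul, sum_neg_distrib, neg_add,
      neg_neg]

theorem signedShiftSum_ne_zero (hF : ∀ z, F.IsRoot z → z.re ≤ 0) {u v : ℂ} (huv : ‖v‖ < ‖u‖)
    {n : ℕ} (a : Fin (n + 1) → ℝ) (ha : ∀ k, 0 < a k) {s : ℂ} (hs : 0 ≤ s.re) :
    signedShiftSum F u v a s ≠ 0 := by
  induction n generalizing F with
  | zero =>
    rw [signedShiftSum_succ, signedShiftSum_fin_zero]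
    exact fun h => (re_lt_zero_of_isRoot_signedShift hF huv (ha 0) h).not_ge hs
  | succ n ih =>
    rw [signedShiftSum_succ]
    exact ih (fun z hz => (re_lt_zero_of_isRoot_signedShift hF huv (ha 0) hz).le) (Fin.tail a)
      fun k => ha k.succ

theorem signedShiftSum_zero_ne_zero (hF : ∀ z, F.IsRoot z → z.re = 0) {u v : ℂ}
    (huv : ‖u‖ ≠ ‖v‖) {n : ℕ} (a : Fin (n + 1) → ℝ) (ha : ∀ k, 0 < a k) :
    signedShiftSum F u v a 0 ≠ 0 := by
  rcases huv.lt_or_gt with hlt | hgt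
  · have hF_neg (z : ℂ) (hz : (F.comp (-X)).IsRoot z) : z.re ≤ 0 := by
      have := hF _ (by simpa [IsRoot, eval_comp] using hz)
      simp only [neg_re, neg_eq_zero] at this
      exact this.le
    rw [← signedShiftSum_comp_neg_X, neg_zero]
    exact signedShiftSum_ne_zero hF_neg hlt a ha le_rfl
  · exact signedShiftSum_ne_zero (fun z hz => (hF z hz).le) hgt a ha le_rfl

end Polynomial

theorem circle_theorem_general_general (n : ℕ) (hn : 1 ≤ n) (G : Polynomial ℝ)
    (hroots : ∀ z : ℂ, (G.map (algebraMap ℝ ℂ)).eval z = 0 → z.im = 0)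
    (a : Fin n → ℝ) (ha : ∀ k, 0 < a k)
    (t : ℂ)
    (ht : ∑ ε : Fin n → Bool,
        (G.map (algebraMap ℝ ℂ)).eval
          (I * (∑ k, (if ε k then (1 : ℂ) else -1) * (a k : ℂ)))
        * t ^ (Finset.univ.filter (fun k => ε k = true)).card = 0) :
    ‖t‖ = 1 := by
  obtain ⟨m, rfl⟩ := Nat.exists_eq_add_of_le' hn
  set F := (G.map (algebraMap ℝ ℂ)).comp (C I * X)
  have hF (z : ℂ) (hz : F.IsRoot z) : z.re = 0 := by
    simpa using hroots (I * z) (by simpa [F, eval_comp] using hz)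
  have hP : signedShiftSum F t 1 a 0 = 0 := by
    simpa [signedShiftSum, F, eval_comp, ← prod_filter] using ht
  by_contra ht_norm
  exact signedShiftSum_zero_ne_zero hF (by simpa using ht_norm) a ha hP

theorem circle_theorem_general (n : ℕ) (hn : 1 ≤ n) (G : Polynomial ℝ)
    (hroots : ∀ z : ℂ, (G.map (algebraMap ℝ ℂ)).eval z = 0 → z.im = 0)
    (hdeg : n ≤ G.natDegree)
    (a : Fin n → ℝ) (ha : ∀ k, 0 < a k)
    (t : ℂ)
    (ht : ∑ ε : Fin n → Bool,
        (G.map (algebraMap ℝ ℂ)).eval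
          (I * (∑ k, (if ε k then (1 : ℂ) else -1) * (a k : ℂ)))
        * t ^ (Finset.univ.filter (fun k => ε k = true)).card = 0) :
    ‖t‖ = 1 :=
  circle_theorem_general_general n hn G hroots a ha t ht
end

section
/- Let p and q be real polynomials with only real, simple, strictly interlacing roots, with deg q = deg p + 1, positive leading coefficients, and such that p(x)q'(x) - p'(x)q(x) > 0 for all real x. Then the polynomial ω(z) = p(z) + i·q(z) has all its roots in the open upper half plane and satisfies |ω(z)| < |ω*(z)| for Im z > 0, i.e., ω belongs to the Hermite-Biehler class. -/
/-!
Since `deg p < deg q` and the zeros `x` of `q` are real and simple, partial fractions give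
`p z / q z = ∑ p x / (q' x * (z - x))`, and the Wronskian condition at a zero of `q` makes every
coefficient `p x / q' x` positive. Hence `Im (p / q) < 0` on the upper half-plane, which is
exactly `|p + i q| < |p - i q| = |ω*|` there. The same inequality at `conj z` rules out zeros of
`ω` in the lower half-plane, and a real zero of `ω` would be a common zero of `p` and `q`, where
the Wronskian vanishes.
-/

open Complex Polynomial Finset

namespace Lagrange

variable {F : Type*} [Field F] {ι : Type*} [DecidableEq ι] {s : Finset ι} {v : ι → F}

theorem eval_div_eval_nodal_eq_sum {f : F[X]} (hvs : Set.InjOn v s) (hf : f.degree < #s)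
    {x : F} (hx : ∀ i ∈ s, x ≠ v i) :
    f.eval x / (nodal s v).eval x
      = ∑ i ∈ s, f.eval (v i) / ((derivative (nodal s v)).eval (v i) * (x - v i)) := by
  have hbary := eval_interpolate_not_at_node (fun i => f.eval (v i)) hx
  rw [← eq_interpolate hvs hf] at hbary
  rw [hbary, mul_div_cancel_left₀ _ (eval_nodal_not_at_node hx)]
  refine sum_congr rfl fun i hi => ?_
  rw [nodalWeight_eq_eval_derivative_nodal hi, div_eq_mul_inv, mul_inv]
  ring

end Lagrange

namespace Polynomial

variable {K : Type*} [Field K]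

theorem nodup_roots_of_eval_derivative_ne_zero {g : K[X]}
    (hsimple : ∀ a ∈ g.roots, (derivative g).eval a ≠ 0) : g.roots.Nodup := by
  classical
  by_cases hg : g = 0
  · simp [hg]
  refine Multiset.nodup_iff_count_le_one.mpr fun a => ?_
  rw [count_roots]
  by_contra! hmult
  obtain ⟨hroot, hroot'⟩ := (one_lt_rootMultiplicity_iff_isRoot hg).mp hmult
  exact hsimple a ((mem_roots hg).mpr hroot) hroot'

theorem eq_C_leadingCoeff_mul_nodal_roots [DecidableEq K] {g : K[X]}
    (hsplit : g.roots.card = g.natDegree) (hnodup : g.roots.Nodup) :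
    g = C g.leadingCoeff * Lagrange.nodal g.roots.toFinset id := by
  conv_lhs => rw [← C_leadingCoeff_mul_prod_multiset_X_sub_C hsplit]
  rw [Lagrange.nodal_eq, prod_eq_multiset_prod, Multiset.toFinset_val, hnodup.dedup]
  rfl

theorem eval_div_eq_sum_roots [DecidableEq K] {f g : K[X]} (hsplit : g.roots.card = g.natDegree)
    (hsimple : ∀ a ∈ g.roots, (derivative g).eval a ≠ 0) (hdeg : f.degree < g.degree)
    {z : K} (hz : g.eval z ≠ 0) :
    f.eval z / g.eval z
      = ∑ a ∈ g.roots.toFinset, f.eval a / ((derivative g).eval a * (z - a)) := by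
  have hg0 : g ≠ 0 := ne_zero_of_degree_gt hdeg
  have hnodup := nodup_roots_of_eval_derivative_ne_zero hsimple
  set s := g.roots.toFinset
  set N := Lagrange.nodal s id
  set c := g.leadingCoeff
  have hg : g = C c * N := eq_C_leadingCoeff_mul_nodal_roots hsplit hnodup
  have hcard : f.degree < #s := by
    rwa [Multiset.toFinset_card_of_nodup hnodup, hsplit, ← degree_eq_natDegree hg0]
  have hzs : ∀ a ∈ s, z ≠ id a := fun a ha hza =>
    hz (by rw [hza]; exact (mem_roots hg0).mp (Multiset.mem_toFinset.mp ha))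
  have hgz : g.eval z = c * N.eval z := by rw [hg, eval_mul, eval_C]
  have hg' : ∀ a, (derivative g).eval a = c * (derivative N).eval a := fun a => by
    rw [hg, derivative_C_mul, eval_mul, eval_C]
  rw [hgz, mul_comm, ← div_div, Lagrange.eval_div_eval_nodal_eq_sum (Set.injOn_id _) hcard hzs,
    sum_div]
  refine sum_congr rfl fun a _ => ?_
  rw [hg', div_div, id]
  ring

theorem eval_map_ofReal (p : ℝ[X]) (x : ℝ) :
    (p.map (algebraMap ℝ ℂ)).eval (x : ℂ) = p.eval x :=
  eval_map_apply (algebraMap ℝ ℂ) x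

theorem eval_map_conj (p : ℝ[X]) (z : ℂ) :
    (p.map (algebraMap ℝ ℂ)).eval (starRingEnd ℂ z)
      = starRingEnd ℂ ((p.map (algebraMap ℝ ℂ)).eval z) := by
  rw [eval_map_algebraMap, eval_map_algebraMap, aeval_conj]

theorem eval_map_ne_zero_of_im_ne_zero {q : ℝ[X]} (hq : q ≠ 0)
    (hreal : ∀ a ∈ (q.map (algebraMap ℝ ℂ)).roots, a.im = 0) {z : ℂ} (hz : z.im ≠ 0) :
    (q.map (algebraMap ℝ ℂ)).eval z ≠ 0 := fun hqz =>
  hz (hreal z ((mem_roots (Polynomial.map_ne_zero hq)).mpr hqz))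

theorem im_eval_map_div_eval_map_neg {p q : ℝ[X]} (hdeg : p.degree < q.degree)
    (hq : 0 < q.natDegree) (hreal : ∀ a ∈ (q.map (algebraMap ℝ ℂ)).roots, a.im = 0)
    (hpos : ∀ x, q.eval x = 0 → 0 < p.eval x * (derivative q).eval x)
    {z : ℂ} (hz : 0 < z.im) :
    ((p.map (algebraMap ℝ ℂ)).eval z / (q.map (algebraMap ℝ ℂ)).eval z).im < 0 := by
  classical
  set Q := q.map (algebraMap ℝ ℂ)
  have hq0 : q ≠ 0 := ne_zero_of_natDegree_gt hq
  have hroot : ∀ a ∈ Q.roots, a = (a.re : ℂ) ∧ q.eval a.re = 0 := fun a ha => by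
    have ha_real : a = (a.re : ℂ) := Complex.ext rfl (by simp [hreal a ha])
    refine ⟨ha_real, ?_⟩
    have := (mem_roots (Polynomial.map_ne_zero hq0)).mp ha
    rwa [IsRoot, ha_real, eval_map_ofReal, ofReal_eq_zero] at this
  have hsimple : ∀ a ∈ Q.roots, (derivative Q).eval a ≠ 0 := fun a ha => by
    obtain ⟨ha_real, hqa⟩ := hroot a ha
    rw [ha_real, derivative_map, eval_map_ofReal, ofReal_ne_zero]
    exact right_ne_zero_of_mul (hpos _ hqa).ne'
  have hnonempty : Q.roots.toFinset.Nonempty := by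
    rw [Multiset.toFinset_nonempty, ← Multiset.card_pos, IsAlgClosed.card_roots_eq_natDegree,
      natDegree_map]
    exact hq
  rw [eval_div_eq_sum_roots IsAlgClosed.card_roots_eq_natDegree hsimple
      (by rwa [degree_map, degree_map]) (eval_map_ne_zero_of_im_ne_zero hq0 hreal hz.ne'), im_sum]
  refine sum_neg (fun a ha => ?_) hnonempty
  obtain ⟨ha_real, hqa⟩ := hroot a (Multiset.mem_toFinset.mp ha)
  set x := a.re
  have hratio : 0 < p.eval x / (derivative q).eval x :=
    div_pos_iff.mpr (mul_pos_iff.mp (hpos x hqa))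
  have hzx : 0 < normSq (z - x) := normSq_pos.mpr fun h => hz.ne' (by simpa using congrArg im h)
  rw [ha_real, derivative_map, eval_map_ofReal, eval_map_ofReal, ← div_div, ← ofReal_div,
    div_eq_mul_inv, im_ofReal_mul, inv_im, sub_im, ofReal_im, sub_zero]
  exact mul_neg_of_pos_of_neg hratio (div_neg_of_neg_of_pos (neg_neg_of_pos hz) hzx)

end Polynomial

namespace Complex

theorem norm_add_I_lt_norm_sub_I {w : ℂ} (hw : w.im < 0) : ‖w + I‖ < ‖w - I‖ := by
  rw [← sq_lt_sq₀ (norm_nonneg _) (norm_nonneg _), Complex.sq_norm, Complex.sq_norm,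
    normSq_apply, normSq_apply]
  simp only [add_re, add_im, sub_re, sub_im, I_re, I_im, add_zero, sub_zero]
  nlinarith

theorem norm_add_I_mul_lt_norm_sub_I_mul {a b : ℂ} (hb : b ≠ 0) (h : (a / b).im < 0) :
    ‖a + I * b‖ < ‖a - I * b‖ := by
  rw [show a + I * b = (a / b + I) * b by field_simp,
    show a - I * b = (a / b - I) * b by field_simp, norm_mul, norm_mul]
  exact mul_lt_mul_of_pos_right (norm_add_I_lt_norm_sub_I h) (norm_pos_iff.mpr hb)

end Complex

theorem hermite_biehler_for_polynomials_general (n : ℕ) (p q : Polynomial ℝ)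
    (hpdeg : p.natDegree = n) (hqdeg : q.natDegree = n + 1)
    (rq : Fin (n + 1) → ℝ)
    (hqroots : (q.map (algebraMap ℝ ℂ)).roots
      = Multiset.ofList (List.ofFn fun i => ((rq i : ℝ) : ℂ)))
    (hW : ∀ x : ℝ, 0 < p.eval x * (Polynomial.derivative q).eval x
        - (Polynomial.derivative p).eval x * q.eval x) :
    (∀ z : ℂ, (p.map (algebraMap ℝ ℂ)).eval z + I * (q.map (algebraMap ℝ ℂ)).eval z = 0
        → 0 < z.im) ∧
    (∀ z : ℂ, 0 < z.im →
      ‖(p.map (algebraMap ℝ ℂ)).eval z + I * (q.map (algebraMap ℝ ℂ)).eval z‖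
        < ‖starRingEnd ℂ
            ((p.map (algebraMap ℝ ℂ)).eval (starRingEnd ℂ z)
              + I * (q.map (algebraMap ℝ ℂ)).eval (starRingEnd ℂ z))‖) := by
  have hq : 0 < q.natDegree := by omega
  have hreal : ∀ a ∈ (q.map (algebraMap ℝ ℂ)).roots, a.im = 0 := by
    simp [hqroots, List.mem_ofFn]
  have hpos : ∀ x, q.eval x = 0 → 0 < p.eval x * (derivative q).eval x := fun x hx => by
    simpa [hx] using hW x
  refine (fun hHB => ⟨fun z hz => ?_, hHB⟩) fun z hz => ?_
  · rw [map_add, map_mul, eval_map_conj, eval_map_conj, conj_I, conj_conj, conj_conj, neg_mul,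
      ← sub_eq_add_neg]
    exact norm_add_I_mul_lt_norm_sub_I_mul
      (eval_map_ne_zero_of_im_ne_zero (ne_zero_of_natDegree_gt hq) hreal hz.ne')
      (im_eval_map_div_eval_map_neg (degree_lt_degree (by omega)) hq hreal hpos hz)
  · rcases lt_trichotomy z.im 0 with hlt | hre | hgt
    · have := hHB (starRingEnd ℂ z) (by simpa using hlt)
      rw [conj_conj, hz, map_zero, norm_zero] at this
      exact absurd this (not_lt.mpr (norm_nonneg _))
    · have hz_real : z = (z.re : ℂ) := Complex.ext rfl (by simp [hre])
      rw [hz_real, eval_map_ofReal, eval_map_ofReal] at hz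
      have hpx : p.eval z.re = 0 := by simpa using congrArg re hz
      have hqx : q.eval z.re = 0 := by simpa using congrArg im hz
      simpa [hpx, hqx] using hW z.re
    · exact hgt

theorem hermite_biehler_for_polynomials (n : ℕ) (p q : Polynomial ℝ)
    (hpdeg : p.natDegree = n) (hqdeg : q.natDegree = n + 1)
    (hplead : 0 < p.leadingCoeff) (hqlead : 0 < q.leadingCoeff)
    (rp : Fin n → ℝ) (rq : Fin (n + 1) → ℝ)
    (hrp : StrictMono rp) (hrq : StrictMono rq)
    (hproots : (p.map (algebraMap ℝ ℂ)).roots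
      = Multiset.ofList (List.ofFn fun i => ((rp i : ℝ) : ℂ)))
    (hqroots : (q.map (algebraMap ℝ ℂ)).roots
      = Multiset.ofList (List.ofFn fun i => ((rq i : ℝ) : ℂ)))
    (hinter : ∀ i : Fin n, rq i.castSucc < rp i ∧ rp i < rq i.succ)
    (hW : ∀ x : ℝ, 0 < p.eval x * (Polynomial.derivative q).eval x
        - (Polynomial.derivative p).eval x * q.eval x) :
    (∀ z : ℂ, (p.map (algebraMap ℝ ℂ)).eval z + I * (q.map (algebraMap ℝ ℂ)).eval z = 0
        → 0 < z.im) ∧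
    (∀ z : ℂ, 0 < z.im →
      ‖(p.map (algebraMap ℝ ℂ)).eval z + I * (q.map (algebraMap ℝ ℂ)).eval z‖
        < ‖starRingEnd ℂ
            ((p.map (algebraMap ℝ ℂ)).eval (starRingEnd ℂ z)
              + I * (q.map (algebraMap ℝ ℂ)).eval (starRingEnd ℂ z))‖) :=
  hermite_biehler_for_polynomials_general n p q hpdeg hqdeg rq hqroots hW
end

section
/- Let p, q be real polynomials with real interlacing roots such that ω₁(z) = p(z) + i q(z) is in the Hermite-Biehler class, let A, B, C be real with A > 0 and C > 0. Then every zero of the polynomial (A z + B)·q(z) - C·p(z) is real. -/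
/-!
Write `P = p(z)`, `Q = q(z)`. Since `p` and `q` are real, `ω*(z) = P - iQ`, and
`|P + iQ|² - |P - iQ|² = 4 Im (P Q̄)`; so the Hermite–Biehler inequality says that
`Im (P Q̄)` has the sign opposite to `Im z` off the real axis. At a zero of
`(Az + B) q - C p` we have `C P Q̄ = (Az + B) |Q|²`, whose imaginary part
`C Im (P Q̄) = A Im z |Q|²` has the sign of `Im z` (or vanishes), a contradiction unless `Im z = 0`.
-/

open Complex ComplexConjugate Polynomial

lemma Complex.norm_add_I_mul_lt_norm_sub_I_mul_iff (P Q : ℂ) :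
    ‖P + I * Q‖ < ‖P - I * Q‖ ↔ (P * conj Q).im < 0 := by
  rw [← sq_lt_sq₀ (norm_nonneg _) (norm_nonneg _), ← normSq_eq_norm_sq, ← normSq_eq_norm_sq,
    ← sub_neg]
  simp only [normSq_apply, add_re, add_im, sub_re, sub_im, mul_re, mul_im, I_re, I_im,
    conj_re, conj_im]
  constructor <;> intro h <;> linarith

section HermiteBiehler

variable {p q : ℝ[X]}

lemma im_aeval_mul_conj_aeval_neg
    (hHB : ∀ z : ℂ, 0 < z.im →
      ‖aeval z p + I * aeval z q‖ < ‖conj (aeval (conj z) p + I * aeval (conj z) q)‖)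
    {z : ℂ} (hz : 0 < z.im) :
    (aeval z p * conj (aeval z q)).im < 0 := by
  have h := hHB z hz
  simp only [aeval_conj, map_add, map_mul, conj_I, conj_conj] at h
  rwa [neg_mul, ← sub_eq_add_neg, norm_add_I_mul_lt_norm_sub_I_mul_iff] at h

lemma im_mul_im_aeval_mul_conj_aeval_neg
    (hHB : ∀ z : ℂ, 0 < z.im →
      ‖aeval z p + I * aeval z q‖ < ‖conj (aeval (conj z) p + I * aeval (conj z) q)‖)
    {z : ℂ} (hz : z.im ≠ 0) :
    z.im * (aeval z p * conj (aeval z q)).im < 0 := by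
  rcases hz.lt_or_gt with hneg | hpos
  · have h := im_aeval_mul_conj_aeval_neg hHB (z := conj z) (by simpa using hneg)
    rw [aeval_conj, aeval_conj, ← map_mul, conj_im] at h
    exact mul_neg_of_neg_of_pos hneg (neg_neg_iff_pos.mp h)
  · exact mul_neg_of_pos_of_neg hpos (im_aeval_mul_conj_aeval_neg hHB hpos)

end HermiteBiehler

theorem three_term_combination_zeros_real_general (p q : Polynomial ℝ)
    (hHBineq : ∀ z : ℂ, 0 < z.im →
      ‖(p.map (algebraMap ℝ ℂ)).eval z + I * (q.map (algebraMap ℝ ℂ)).eval z‖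
        < ‖starRingEnd ℂ
            ((p.map (algebraMap ℝ ℂ)).eval (starRingEnd ℂ z)
              + I * (q.map (algebraMap ℝ ℂ)).eval (starRingEnd ℂ z))‖)
    (A B C : ℝ) (hA : 0 < A) (hC : 0 < C)
    (z : ℂ)
    (hz : ((A : ℂ) * z + B) * (q.map (algebraMap ℝ ℂ)).eval z
        - (C : ℂ) * (p.map (algebraMap ℝ ℂ)).eval z = 0) :
    z.im = 0 := by
  simp only [eval_map_algebraMap] at hHBineq hz
  by_contra him
  have hsign := im_mul_im_aeval_mul_conj_aeval_neg hHBineq him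
  have hzero : C * (aeval z p * conj (aeval z q)).im = A * z.im * normSq (aeval z q) := by
    have h : (C : ℂ) * (aeval z p * conj (aeval z q))
        = ((A : ℂ) * z + B) * (aeval z q * conj (aeval z q)) := by
      linear_combination -(conj (aeval z q)) * hz
    simpa [mul_conj] using congrArg Complex.im h
  have hnonneg : 0 ≤ A * z.im ^ 2 * normSq (aeval z q) :=
    mul_nonneg (mul_nonneg hA.le (sq_nonneg _)) (normSq_nonneg _)
  have hneg : C * (z.im * (aeval z p * conj (aeval z q)).im) < 0 := mul_neg_of_pos_of_neg hC hsign
  have hscaled : C * (z.im * (aeval z p * conj (aeval z q)).im)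
      = A * z.im ^ 2 * normSq (aeval z q) := by
    rw [mul_left_comm, hzero]; ring
  linarith

theorem three_term_combination_zeros_real (p q : Polynomial ℝ)
    (hproots : ∀ z : ℂ, (p.map (algebraMap ℝ ℂ)).eval z = 0 → z.im = 0)
    (hqroots : ∀ z : ℂ, (q.map (algebraMap ℝ ℂ)).eval z = 0 → z.im = 0)
    (hHBzeros : ∀ z : ℂ,
      (p.map (algebraMap ℝ ℂ)).eval z + I * (q.map (algebraMap ℝ ℂ)).eval z = 0 → 0 < z.im)
    (hHBineq : ∀ z : ℂ, 0 < z.im →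
      ‖(p.map (algebraMap ℝ ℂ)).eval z + I * (q.map (algebraMap ℝ ℂ)).eval z‖
        < ‖starRingEnd ℂ
            ((p.map (algebraMap ℝ ℂ)).eval (starRingEnd ℂ z)
              + I * (q.map (algebraMap ℝ ℂ)).eval (starRingEnd ℂ z))‖)
    (A B C : ℝ) (hA : 0 < A) (hC : 0 < C)
    (z : ℂ)
    (hz : ((A : ℂ) * z + B) * (q.map (algebraMap ℝ ℂ)).eval z
        - (C : ℂ) * (p.map (algebraMap ℝ ℂ)).eval z = 0) :
    z.im = 0 :=
  three_term_combination_zeros_real_general p q hHBineq A B C hA hC z hz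
end

section
/- Let G(z) = e^{αz}(cₙ zⁿ + ⋯ + c₀) with α, c₀,…,cₙ real, cₙ ≠ 0, a > 0, b ∈ ℝ. Then H(z) = G(z-ia)e^{-ib} + G(z+ia)e^{ib} equals e^{αz}(dₙ zⁿ + ⋯ + d₀) where dₙ = 2cₙ cos(b + αa) and d_{n-1} = 2c_{n-1} cos(b + αa) - 2an cₙ sin(b + αa); in particular, dₙ and d_{n-1} cannot both vanish. -/
open Complex Finset

theorem top_coefficients_of_H (n : ℕ) (hn : 1 ≤ n) (α : ℝ) (c : ℕ → ℝ)
    (hcn : c n ≠ 0) (a b : ℝ) (ha : 0 < a) :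
    let G : ℂ → ℂ := fun z => Complex.exp (α * z) * ∑ k ∈ Finset.range (n + 1), (c k : ℂ) * z ^ k
    let H : ℂ → ℂ := fun z => G (z - I * a) * Complex.exp (-(b * I)) + G (z + I * a) * Complex.exp (b * I)
    ∃ d : ℕ → ℂ,
      (∀ z : ℂ, H z = Complex.exp (α * z) * ∑ k ∈ Finset.range (n + 1), d k * z ^ k) ∧
      d n = 2 * (c n : ℂ) * Real.cos (b + α * a) ∧
      d (n - 1) = 2 * (c (n - 1) : ℂ) * Real.cos (b + α * a)
        - 2 * (a : ℂ) * (n : ℂ) * (c n : ℂ) * Real.sin (b + α * a) ∧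
      ¬(d n = 0 ∧ d (n - 1) = 0) := by
  intro G H
  set θ : ℝ := b + α * a with hθ
  set Em : ℂ := Complex.exp (-(θ : ℂ) * I) with hEm
  set Ep : ℂ := Complex.exp ((θ : ℂ) * I) with hEp
  set d : ℕ → ℂ := fun j => ∑ k ∈ Finset.range (n + 1),
      (c k : ℂ) * (k.choose j : ℂ) *
        (Em * (-(I * (a : ℂ))) ^ (k - j) + Ep * (I * (a : ℂ)) ^ (k - j)) with hd
  have hEm' : Em = (Real.cos θ : ℂ) - (Real.sin θ : ℂ) * I := by
    rw [hEm, show -(θ : ℂ) * I = ((-θ : ℝ) : ℂ) * I by push_cast; ring,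
      Complex.exp_mul_I, ← Complex.ofReal_cos, ← Complex.ofReal_sin]
    push_cast [Real.cos_neg, Real.sin_neg]
    ring
  have hEp' : Ep = (Real.cos θ : ℂ) + (Real.sin θ : ℂ) * I := by
    rw [hEp, Complex.exp_mul_I, ← Complex.ofReal_cos, ← Complex.ofReal_sin]
  -- binomial expansion over the extended range
  have binom : ∀ (w z : ℂ) (k : ℕ), k ≤ n →
      (z + w) ^ k = ∑ j ∈ Finset.range (n + 1), (k.choose j : ℂ) * w ^ (k - j) * z ^ j := by
    intro w z k hk
    have hsub : ∑ j ∈ Finset.range (k + 1), (k.choose j : ℂ) * w ^ (k - j) * z ^ j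
        = ∑ j ∈ Finset.range (n + 1), (k.choose j : ℂ) * w ^ (k - j) * z ^ j := by
      refine Finset.sum_subset (Finset.range_subset_range.mpr (by omega)) ?_
      intro j _ hj
      have : k < j := by simpa using hj
      simp [Nat.choose_eq_zero_of_lt this]
    rw [← hsub, add_pow]
    exact Finset.sum_congr rfl fun j _ => by ring
  have key : ∀ z : ℂ, ∑ j ∈ Finset.range (n + 1), d j * z ^ j
      = Em * ∑ k ∈ Finset.range (n + 1), (c k : ℂ) * (z - I * a) ^ k
        + Ep * ∑ k ∈ Finset.range (n + 1), (c k : ℂ) * (z + I * a) ^ k := by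
    intro z
    rw [Finset.mul_sum, Finset.mul_sum, ← Finset.sum_add_distrib]
    simp only [hd, Finset.sum_mul]
    rw [Finset.sum_comm]
    refine Finset.sum_congr rfl fun k hk => ?_
    have hk' : k ≤ n := by have := Finset.mem_range.mp hk; omega
    have hm : (z - I * a) ^ k
        = ∑ j ∈ Finset.range (n + 1), (k.choose j : ℂ) * (-(I * (a : ℂ))) ^ (k - j) * z ^ j := by
      rw [show z - I * (a : ℂ) = z + (-(I * (a : ℂ))) by ring]
      exact binom _ z k hk'
    have hp : (z + I * a) ^ k
        = ∑ j ∈ Finset.range (n + 1), (k.choose j : ℂ) * (I * (a : ℂ)) ^ (k - j) * z ^ j :=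
      binom _ z k hk'
    rw [hm, hp, Finset.mul_sum, Finset.mul_sum, Finset.mul_sum, Finset.mul_sum,
      ← Finset.sum_add_distrib]
    exact Finset.sum_congr rfl fun j _ => by ring
  have hdn : d n = 2 * (c n : ℂ) * (Real.cos θ : ℂ) := by
    rw [hd]
    beta_reduce
    rw [Finset.sum_eq_single_of_mem n (Finset.self_mem_range_succ n)
      (fun k hk hkn => by
        have : k < n := by have := Finset.mem_range.mp hk; omega
        simp [Nat.choose_eq_zero_of_lt this])]
    simp only [Nat.choose_self, Nat.sub_self, pow_zero, Nat.cast_one]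
    rw [hEm', hEp']
    ring
  have hdn1 : d (n - 1) = 2 * (c (n - 1) : ℂ) * (Real.cos θ : ℂ)
      - 2 * (a : ℂ) * (n : ℂ) * (c n : ℂ) * (Real.sin θ : ℂ) := by
    rw [hd]
    beta_reduce
    rw [Finset.sum_range_succ]
    rw [Finset.sum_eq_single_of_mem (n - 1) (Finset.mem_range.mpr (by omega))
      (fun k hk hkn => by
        have : k < n - 1 := by have := Finset.mem_range.mp hk; omega
        simp [Nat.choose_eq_zero_of_lt this])]
    have h1 : n - (n - 1) = 1 := by omega
    have h2 : (n.choose (n - 1) : ℂ) = (n : ℂ) := by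
      have := Nat.choose_symm (show 1 ≤ n from hn)
      rw [this, Nat.choose_one_right]
    rw [h1, h2]
    simp only [Nat.choose_self, Nat.sub_self, pow_zero, Nat.cast_one, pow_one]
    rw [hEm', hEp']
    linear_combination (2 * (c n : ℂ) * (n : ℂ) * (a : ℂ) * (Real.sin θ : ℂ)) * Complex.I_sq
  refine ⟨d, ?_, hdn, hdn1, ?_⟩
  · intro z
    simp only [H, G]
    rw [key z]
    have e1 : Complex.exp (α * (z - I * a)) * Complex.exp (-(b * I))
        = Complex.exp (α * z) * Em := by
      rw [hEm, ← Complex.exp_add, ← Complex.exp_add]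
      congr 1
      rw [hθ]; push_cast; ring
    have e2 : Complex.exp (α * (z + I * a)) * Complex.exp (b * I)
        = Complex.exp (α * z) * Ep := by
      rw [hEp, ← Complex.exp_add, ← Complex.exp_add]
      congr 1
      rw [hθ]; push_cast; ring
    calc Complex.exp (α * (z - I * a)) * (∑ k ∈ Finset.range (n + 1), (c k : ℂ) * (z - I * a) ^ k)
          * Complex.exp (-(b * I))
        + Complex.exp (α * (z + I * a)) * (∑ k ∈ Finset.range (n + 1), (c k : ℂ) * (z + I * a) ^ k)
          * Complex.exp (b * I)
        = (Complex.exp (α * (z - I * a)) * Complex.exp (-(b * I)))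
            * (∑ k ∈ Finset.range (n + 1), (c k : ℂ) * (z - I * a) ^ k)
          + (Complex.exp (α * (z + I * a)) * Complex.exp (b * I))
            * (∑ k ∈ Finset.range (n + 1), (c k : ℂ) * (z + I * a) ^ k) := by ring
      _ = (Complex.exp (α * z) * Em)
            * (∑ k ∈ Finset.range (n + 1), (c k : ℂ) * (z - I * a) ^ k)
          + (Complex.exp (α * z) * Ep)
            * (∑ k ∈ Finset.range (n + 1), (c k : ℂ) * (z + I * a) ^ k) := by rw [e1, e2]
      _ = _ := by ring
  · rintro ⟨h1, h2⟩
    rw [hdn] at h1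
    rw [hdn1] at h2
    have h1' : (2 * c n * Real.cos θ : ℝ) = 0 := by exact_mod_cast h1
    have hc : Real.cos θ = 0 := by
      rcases mul_eq_zero.mp h1' with h | h
      · rcases mul_eq_zero.mp h with h' | h'
        · norm_num at h'
        · exact absurd h' hcn
      · exact h
    have hsin : Real.sin θ ≠ 0 := by
      intro hs
      have := Real.sin_sq_add_cos_sq θ
      rw [hs, hc] at this
      norm_num at this
    have h2' : (2 * c (n - 1) * Real.cos θ - 2 * a * (n : ℝ) * c n * Real.sin θ : ℝ) = 0 := by
      exact_mod_cast h2
    rw [hc] at h2'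
    have hn0 : (0 : ℝ) < (n : ℝ) := by exact_mod_cast hn
    have hne : (2 * a * (n : ℝ)) * c n * Real.sin θ ≠ 0 :=
      mul_ne_zero (mul_ne_zero (by positivity) hcn) hsin
    apply hne
    linarith
end

section
/- Let g(z) = ∏_{k=1}^{∞} (1 - z²/αₖ²) with αₖ real, Σ αₖ^{-2} < ∞, and infinitely many αₖ. Then for any fixed real a > 0 and any m ∈ ℕ, the quantity g(iT + ia) - g(iT - ia) is real, nonnegative for T ≥ a, and grows faster than T^m as T → ∞; i.e., (g(iT+ia) - g(iT-ia))/T^m → ∞. -/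
/-!
On the imaginary axis every factor of `g` is real and at least one:
`g(it) = ∏ₖ (1 + t²/αₖ²)`. Splitting off the factor `k = 0` and bounding the others from below
gives `g(i(T+a)) - g(i(T-a)) ≥ (4aT/α₀²) ∏_{k=1}^{m} (T-a)²/αₖ²`, which is of order `T^(2m+1)`.
-/

open Complex Filter

section RealProducts

variable {ι : Type*}

theorem tprod_le_tprod_of_nonneg {f g : ι → ℝ} (h0 : ∀ i, 0 ≤ f i) (h : ∀ i, f i ≤ g i)
    (hf : Multipliable f) (hg : Multipliable g) : ∏' i, f i ≤ ∏' i, g i :=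
  le_of_tendsto_of_tendsto' hf.hasProd hg.hasProd fun _ =>
    Finset.prod_le_prod (fun i _ => h0 i) fun i _ => h i

theorem prod_le_tprod_of_one_le {f : ι → ℝ} (s : Finset ι) (h : ∀ i, 1 ≤ f i)
    (hf : Multipliable f) : ∏ i ∈ s, f i ≤ ∏' i, f i :=
  ge_of_tendsto hf.hasProd <| (eventually_ge_atTop s).mono fun _ hst =>
    Finset.prod_le_prod_of_subset_of_one_le hst (fun i _ => zero_le_one.trans (h i))
      fun i _ _ => h i

theorem mul_tprod_succ_le_tprod_sub_tprod {f g : ℕ → ℝ} (h1 : ∀ k, 1 ≤ f k)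
    (hfg : ∀ k, f k ≤ g k) (hf : Multipliable fun k => f (k + 1))
    (hg : Multipliable fun k => g (k + 1)) :
    (g 0 - f 0) * ∏' k, f (k + 1) ≤ ∏' k, g k - ∏' k, f k := by
  rw [tprod_eq_zero_mul' hf, tprod_eq_zero_mul' hg]
  have htail : ∏' k, f (k + 1) ≤ ∏' k, g (k + 1) :=
    tprod_le_tprod_of_nonneg (fun k => zero_le_one.trans (h1 _)) (fun k => hfg _) hf hg
  have hg0 : 0 ≤ g 0 := zero_le_one.trans ((h1 0).trans (hfg 0))
  nlinarith

end RealProducts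

theorem tendsto_div_pow_atTop_of_const_mul_pow_le {f : ℝ → ℝ} {c : ℝ} {m n : ℕ} (hc : 0 < c)
    (hmn : m < n) (hf : ∀ᶠ T in atTop, c * T ^ n ≤ f T) :
    Tendsto (fun T => f T / T ^ m) atTop atTop := by
  refine tendsto_atTop_mono' atTop ?_
    ((tendsto_pow_atTop (Nat.sub_ne_zero_of_lt hmn)).const_mul_atTop hc)
  filter_upwards [hf, eventually_gt_atTop 0] with T hfT hT
  rw [le_div_iff₀ (pow_pos hT m), mul_assoc, ← pow_add, Nat.sub_add_cancel hmn.le]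
  exact hfT

noncomputable def imagAxisProduct (α : ℕ → ℝ) (t : ℝ) : ℝ :=
  ∏' k, (1 + t ^ 2 / α k ^ 2)

theorem tprod_one_sub_I_mul_sq_div (α : ℕ → ℝ) (t : ℝ) :
    ∏' k, (1 - (I * t) ^ 2 / (α k : ℂ) ^ 2) = (imagAxisProduct α t : ℂ) := by
  have hfactor : ∀ k, (1 - (I * t) ^ 2 / (α k : ℂ) ^ 2) = ofRealHom (1 + t ^ 2 / α k ^ 2) := by
    intro k
    simp only [ofRealHom_eq_coe, ofReal_add, ofReal_one, ofReal_div, ofReal_pow, mul_pow, I_sq]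
    ring
  rw [tprod_congr hfactor, imagAxisProduct]
  exact (isometry_ofReal.isClosedEmbedding.map_tprod _).symm

theorem one_le_one_add_sq_div (α : ℕ → ℝ) (t : ℝ) (k : ℕ) : 1 ≤ 1 + t ^ 2 / α k ^ 2 :=
  le_add_of_nonneg_right (by positivity)

section ImagAxisProduct

variable {α : ℕ → ℝ}

theorem multipliable_one_add_sq_div (hsum : Summable fun k => 1 / α k ^ 2) (t : ℝ) :
    Multipliable fun k => 1 + t ^ 2 / α k ^ 2 :=
  Real.multipliable_one_add_of_summable <|
    (hsum.mul_left (t ^ 2)).congr fun k => by rw [mul_one_div]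

theorem imagAxisProduct_mono (hsum : Summable fun k => 1 / α k ^ 2) {s t : ℝ}
    (hst : s ^ 2 ≤ t ^ 2) : imagAxisProduct α s ≤ imagAxisProduct α t :=
  tprod_le_tprod_of_nonneg (fun k => zero_le_one.trans (one_le_one_add_sq_div α s k))
    (fun k => by gcongr) (multipliable_one_add_sq_div hsum s) (multipliable_one_add_sq_div hsum t)

theorem pow_mul_prod_le_imagAxisProduct (hsum : Summable fun k => 1 / α k ^ 2) (t : ℝ) (m : ℕ) :
    t ^ (2 * m) * ∏ k ∈ Finset.range m, (α k ^ 2)⁻¹ ≤ imagAxisProduct α t := by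
  calc t ^ (2 * m) * ∏ k ∈ Finset.range m, (α k ^ 2)⁻¹
      = ∏ k ∈ Finset.range m, t ^ 2 / α k ^ 2 := by
        simp only [div_eq_mul_inv, Finset.prod_mul_distrib, Finset.prod_const,
          Finset.card_range, pow_mul]
    _ ≤ ∏ k ∈ Finset.range m, (1 + t ^ 2 / α k ^ 2) :=
        Finset.prod_le_prod (fun _ _ => by positivity) fun _ _ => le_add_of_nonneg_left zero_le_one
    _ ≤ imagAxisProduct α t :=
        prod_le_tprod_of_one_le _ (one_le_one_add_sq_div α t) (multipliable_one_add_sq_div hsum t)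

theorem sq_sub_sq_div_mul_le_imagAxisProduct_sub (hsum : Summable fun k => 1 / α k ^ 2)
    {s t : ℝ} (hst : s ^ 2 ≤ t ^ 2) :
    (t ^ 2 - s ^ 2) / α 0 ^ 2 * imagAxisProduct (fun k => α (k + 1)) s ≤
      imagAxisProduct α t - imagAxisProduct α s := by
  have hsum' : Summable fun k => 1 / α (k + 1) ^ 2 := (summable_nat_add_iff 1).2 hsum
  have h := mul_tprod_succ_le_tprod_sub_tprod (f := fun k => 1 + s ^ 2 / α k ^ 2)
    (g := fun k => 1 + t ^ 2 / α k ^ 2) (one_le_one_add_sq_div α s) (fun k => by gcongr)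
    (multipliable_one_add_sq_div hsum' s) (multipliable_one_add_sq_div hsum' t)
  rwa [add_sub_add_left_eq_sub, ← sub_div] at h

theorem eventually_const_mul_pow_le_imagAxisProduct_sub (hα : ∀ k, α k ≠ 0)
    (hsum : Summable fun k => 1 / α k ^ 2) {a : ℝ} (ha : 0 < a) (m : ℕ) :
    ∃ c > 0, ∀ᶠ T in atTop,
      c * T ^ (2 * m + 1) ≤ imagAxisProduct α (T + a) - imagAxisProduct α (T - a) := by
  set C := ∏ k ∈ Finset.range m, (α (k + 1) ^ 2)⁻¹
  have hC : 0 < C := Finset.prod_pos fun k _ => by have := hα (k + 1); positivity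
  refine ⟨4 * a / α 0 ^ 2 * C / 4 ^ m, by have := hα 0; positivity, ?_⟩
  filter_upwards [eventually_ge_atTop (2 * a)] with T hT
  have hTa : (T / 2) ^ (2 * m) ≤ (T - a) ^ (2 * m) :=
    pow_le_pow_left₀ (by linarith) (by linarith) _
  calc 4 * a / α 0 ^ 2 * C / 4 ^ m * T ^ (2 * m + 1)
      = 4 * a * T / α 0 ^ 2 * ((T / 2) ^ (2 * m) * C) := by
        rw [div_pow, pow_mul, pow_mul, pow_succ]; ring
    _ ≤ ((T + a) ^ 2 - (T - a) ^ 2) / α 0 ^ 2 * imagAxisProduct (fun k => α (k + 1)) (T - a) := by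
        rw [show (T + a) ^ 2 - (T - a) ^ 2 = 4 * a * T by ring]
        refine mul_le_mul_of_nonneg_left ?_ (div_nonneg (by nlinarith) (sq_nonneg _))
        exact (mul_le_mul_of_nonneg_right hTa hC.le).trans
          (pow_mul_prod_le_imagAxisProduct ((summable_nat_add_iff 1).2 hsum) _ m)
    _ ≤ _ := sq_sub_sq_div_mul_le_imagAxisProduct_sub hsum (by nlinarith)

end ImagAxisProduct

theorem g_difference_growth (α : ℕ → ℝ) (hα : ∀ k, α k ≠ 0)
    (hsum : Summable fun k => 1 / (α k) ^ 2)
    (a : ℝ) (ha : 0 < a) (m : ℕ) :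
    let g : ℂ → ℂ := fun z => ∏' k : ℕ, (1 - z ^ 2 / ((α k : ℂ)) ^ 2)
    (∀ T : ℝ, (g (I * T + I * a) - g (I * T - I * a)).im = 0) ∧
    (∀ T : ℝ, a ≤ T → 0 ≤ (g (I * T + I * a) - g (I * T - I * a)).re) ∧
    Tendsto (fun T : ℝ => (g (I * T + I * a) - g (I * T - I * a)).re / T ^ m)
      atTop atTop := by
  intro g
  have hdiff : ∀ T : ℝ, g (I * T + I * a) - g (I * T - I * a) =
      ((imagAxisProduct α (T + a) - imagAxisProduct α (T - a) : ℝ) : ℂ) := by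
    intro T
    simp only [g, ← mul_add, ← mul_sub, ← ofReal_add, ← ofReal_sub, tprod_one_sub_I_mul_sq_div]
  obtain ⟨c, hc, hgrowth⟩ := eventually_const_mul_pow_le_imagAxisProduct_sub hα hsum ha m
  refine ⟨fun T => by rw [hdiff, ofReal_im], fun T hT => ?_, ?_⟩
  · rw [hdiff, ofReal_re, sub_nonneg]
    exact imagAxisProduct_mono hsum (by nlinarith)
  · simp only [hdiff, ofReal_re]
    exact tendsto_div_pow_atTop_of_const_mul_pow_le hc (by omega) hgrowth
end
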